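/- arXiv:1309.2106 — 12 statements merged into one kernel-verified Lean document; each statement's English description precedes it below -/
import Mathlib

section
/- For all integers k, m ≥ 0 and all real x, 1 = x^(k+1) · Σ_{i=0}^{m} C(k+i, k) (1-x)^i + (1-x)^(m+1) · Σ_{i=0}^{k} C(m+i, m) x^i. -/
lemma cb_step (m k : ℕ) (x : ℝ) :
    (1 - x) * ∑ i ∈ Finset.range (k + 1), (Nat.choose (m + 1 + i) (m + 1) : ℝ) * x ^ i
      = (∑ i ∈ Finset.range (k + 1), (Nat.choose (m + i) m : ℝ) * x ^ i)
        - (Nat.choose (m + k + 1) (m + 1) : ℝ) * x ^ (k + 1) := by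
  induction k with
  | zero => simp
  | succ k ih =>
      rw [Finset.sum_range_succ, Finset.sum_range_succ (f := fun i => (Nat.choose (m + i) m : ℝ) * x ^ i)]
      have pascal : (Nat.choose (m + k + 2) (m + 1) : ℝ)
          = (Nat.choose (m + k + 1) m : ℝ) + (Nat.choose (m + k + 1) (m + 1) : ℝ) := by
        push_cast [show m + k + 2 = (m + k + 1) + 1 by ring, Nat.choose_succ_succ]
        ring
      have e1 : m + 1 + (k + 1) = m + k + 2 := by ring
      have e2 : m + (k + 1) = m + k + 1 := by ring
      have e4 : m + k + 1 + 1 = m + k + 2 := by ring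
      rw [mul_add, ih, e1, e2, e4, pascal]
      ring

theorem chaundy_bullard (k m : ℕ) (x : ℝ) :
    1 = x ^ (k + 1) * ∑ i ∈ Finset.range (m + 1), (Nat.choose (k + i) k : ℝ) * (1 - x) ^ i
      + (1 - x) ^ (m + 1) * ∑ i ∈ Finset.range (k + 1), (Nat.choose (m + i) m : ℝ) * x ^ i := by
  induction m with
  | zero =>
      have h := geom_sum_mul x (k + 1)
      simp only [Finset.range_one, Finset.sum_singleton, pow_zero, mul_one, Nat.add_zero,
        Nat.choose_self, Nat.cast_one, pow_one, Nat.zero_add, Nat.choose_zero_right, one_mul]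
      linear_combination h
  | succ m ih =>
      rw [Finset.sum_range_succ]
      have key := cb_step m k x
      have hc : (Nat.choose (k + (m + 1)) k : ℝ) = (Nat.choose (m + k + 1) (m + 1) : ℝ) := by
        have h1 : (m + k + 1).choose k = (m + k + 1).choose (m + 1) := by
          rw [← Nat.choose_symm (show m + 1 ≤ m + k + 1 by omega)]
          congr 1; omega
        rw [show k + (m + 1) = m + k + 1 by ring, h1]
      linear_combination ih - (1 - x) ^ (m + 1) * key - x ^ (k + 1) * (1 - x) ^ (m + 1) * hc
end

section
/- For all integers k, m ≥ 0 and all real (or rational/complex) x, y with x + y ≠ 0, x^(m+1) y^(k+1) = Σ_{i=0}^{m} C(k+i, k) x^(m-i+1) (xy/(x+y))^(k+i+1) + Σ_{i=0}^{k} C(m+i, m) y^(k-i+1) (xy/(x+y))^(m+i+1). -/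
open Finset

private lemma pascal_sum (k n : ℕ) (b : ℝ) :
    ∑ i ∈ range (n + 1), (Nat.choose (k + 1 + i) (k + 1) : ℝ) * b ^ i
      = ∑ i ∈ range (n + 1), (Nat.choose (k + i) k : ℝ) * b ^ i
        + b * ∑ i ∈ range n, (Nat.choose (k + 1 + i) (k + 1) : ℝ) * b ^ i := by
  have hsplit : ∀ i : ℕ, (Nat.choose (k + 1 + i) (k + 1) : ℝ)
      = (Nat.choose (k + i) k : ℝ) + (Nat.choose (k + i) (k + 1) : ℝ) := by
    intro i
    have : k + 1 + i = (k + i) + 1 := by omega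
    rw [this, Nat.choose_succ_succ]
    push_cast
    ring
  calc ∑ i ∈ range (n + 1), (Nat.choose (k + 1 + i) (k + 1) : ℝ) * b ^ i
      = ∑ i ∈ range (n + 1), ((Nat.choose (k + i) k : ℝ) * b ^ i
          + (Nat.choose (k + i) (k + 1) : ℝ) * b ^ i) := by
        apply Finset.sum_congr rfl; intro i _; rw [hsplit]; ring
    _ = ∑ i ∈ range (n + 1), (Nat.choose (k + i) k : ℝ) * b ^ i
          + ∑ i ∈ range (n + 1), (Nat.choose (k + i) (k + 1) : ℝ) * b ^ i :=
        Finset.sum_add_distrib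
    _ = _ := by
        congr 1
        rw [Finset.sum_range_succ']
        simp only [Nat.add_zero, Nat.choose_eq_zero_of_lt (Nat.lt_succ_self k)]
        rw [Finset.mul_sum]
        simp only [Nat.cast_zero, zero_mul, pow_zero, mul_one, add_zero]
        apply Finset.sum_congr rfl
        intro i _
        have : k + (i + 1) = k + 1 + i := by omega
        rw [this]
        ring

private def S (k m : ℕ) (a b : ℝ) : ℝ :=
  a ^ (k + 1) * ∑ i ∈ range (m + 1), (Nat.choose (k + i) k : ℝ) * b ^ i
    + b ^ (m + 1) * ∑ i ∈ range (k + 1), (Nat.choose (m + i) m : ℝ) * a ^ i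

private lemma S_rec (k m : ℕ) (a b : ℝ) :
    S (k + 1) (m + 1) a b = a * S k (m + 1) a b + b * S (k + 1) m a b := by
  unfold S
  rw [pascal_sum k (m + 1) b, pascal_sum m (k + 1) a]
  ring

private lemma S_left (m : ℕ) (a b : ℝ) (hab : a + b = 1) : S 0 m a b = 1 := by
  unfold S
  simp only [Nat.zero_add, Nat.choose_zero_right, Nat.cast_one, one_mul, zero_add,
    Finset.range_one, Finset.sum_singleton, pow_zero, Nat.add_zero, Nat.choose_self,
    mul_one, pow_one]
  have h := geom_sum_mul b (m + 1)
  linear_combination (∑ i ∈ range (m + 1), b ^ i) * hab - h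

private lemma S_right (k : ℕ) (a b : ℝ) (hab : a + b = 1) : S k 0 a b = 1 := by
  unfold S
  simp only [Nat.choose_zero_right, Nat.cast_one, one_mul, zero_add,
    Finset.range_one, Finset.sum_singleton, pow_zero, Nat.add_zero, Nat.choose_self,
    mul_one, pow_one]
  have h := geom_sum_mul a (k + 1)
  linear_combination (∑ i ∈ range (k + 1), a ^ i) * hab - h

private lemma S_eq_one (a b : ℝ) (hab : a + b = 1) (n : ℕ) :
    ∀ k m, k + m = n → S k m a b = 1 := by
  induction n using Nat.strong_induction_on with
  | _ n ih =>
    intro k m hkm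
    match k, m with
    | 0, m => exact S_left m a b hab
    | k + 1, 0 => exact S_right (k + 1) a b hab
    | k + 1, m + 1 =>
      rw [S_rec, ih (k + (m + 1)) (by omega) k (m + 1) rfl,
        ih ((k + 1) + m) (by omega) (k + 1) m rfl]
      linarith

theorem chaundy_bullard_homogeneous (k m : ℕ) (x y : ℝ) (hxy : x + y ≠ 0) :
    x ^ (m + 1) * y ^ (k + 1)
      = ∑ i ∈ Finset.range (m + 1),
          (Nat.choose (k + i) k : ℝ) * x ^ (m - i + 1) * (x * y / (x + y)) ^ (k + i + 1)
      + ∑ i ∈ Finset.range (k + 1),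
          (Nat.choose (m + i) m : ℝ) * y ^ (k - i + 1) * (x * y / (x + y)) ^ (m + i + 1) := by
  have hab : x / (x + y) + y / (x + y) = 1 := by field_simp
  have h := S_eq_one (x / (x + y)) (y / (x + y)) hab (k + m) k m rfl
  unfold S at h
  calc x ^ (m + 1) * y ^ (k + 1)
      = x ^ (m + 1) * y ^ (k + 1) *
        ((x / (x + y)) ^ (k + 1) * ∑ i ∈ range (m + 1), (Nat.choose (k + i) k : ℝ) * (y / (x + y)) ^ i
          + (y / (x + y)) ^ (m + 1) * ∑ i ∈ range (k + 1), (Nat.choose (m + i) m : ℝ) * (x / (x + y)) ^ i) := by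
        rw [h, mul_one]
    _ = _ := by
        rw [mul_add]
        congr 1
        · rw [Finset.mul_sum, Finset.mul_sum]
          apply Finset.sum_congr rfl
          intro i hi
          obtain ⟨j, rfl⟩ := Nat.exists_eq_add_of_le (Nat.lt_succ_iff.mp (Finset.mem_range.mp hi))
          have hj : i + j - i = j := by omega
          rw [hj]
          field_simp
          ring
        · rw [Finset.mul_sum, Finset.mul_sum]
          apply Finset.sum_congr rfl
          intro i hi
          obtain ⟨j, rfl⟩ := Nat.exists_eq_add_of_le (Nat.lt_succ_iff.mp (Finset.mem_range.mp hi))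
          have hj : i + j - i = j := by omega
          rw [hj]
          field_simp
          ring
end

section
/- For all integers k, m ≥ 0 and all real x, y satisfying xy = x + y, x^(m+1) y^(k+1) = Σ_{i=0}^{m} C(k+i, k) x^(m-i+1) + Σ_{i=0}^{k} C(m+i, m) y^(k-i+1). -/
theorem graham_knuth_patashnik (k m : ℕ) (x y : ℝ) (h : x * y = x + y) :
    x ^ (m + 1) * y ^ (k + 1)
      = ∑ i ∈ Finset.range (m + 1), (Nat.choose (k + i) k : ℝ) * x ^ (m - i + 1)
      + ∑ i ∈ Finset.range (k + 1), (Nat.choose (m + i) m : ℝ) * y ^ (k - i + 1) := by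
  induction m generalizing k with
  | zero =>
    induction k with
    | zero => simpa using h
    | succ k ih =>
      simp only [Nat.zero_add, Nat.choose_zero_right, Nat.cast_one, one_mul,
        Finset.sum_range_one, Nat.choose_self, Nat.add_zero, Nat.choose_self] at ih ⊢
      have step : x ^ 1 * y ^ (k + 1 + 1) = x ^ 1 * y ^ (k + 1) + y ^ (k + 1 + 1) := by
        calc x ^ 1 * y ^ (k + 1 + 1) = (x * y) * y ^ (k + 1) := by ring
          _ = (x + y) * y ^ (k + 1) := by rw [h]
          _ = x ^ 1 * y ^ (k + 1) + y ^ (k + 1 + 1) := by ring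
      rw [step, ih, Finset.sum_range_succ' (fun i => y ^ (k + 1 - i + 1)) (k + 1)]
      simp only [Nat.succ_sub_succ, Nat.sub_zero]
      ring
  | succ m ihm =>
    induction k with
    | zero =>
      have step : x ^ (m + 1 + 1) * y ^ (0 + 1)
          = x ^ (m + 1 + 1) + x ^ (m + 1) * y ^ (0 + 1) := by
        calc x ^ (m + 1 + 1) * y ^ (0 + 1) = x ^ (m + 1) * (x * y) := by ring
          _ = x ^ (m + 1) * (x + y) := by rw [h]
          _ = x ^ (m + 1 + 1) + x ^ (m + 1) * y ^ (0 + 1) := by ring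
      rw [step, ihm 0]
      simp only [Nat.zero_add, Nat.choose_zero_right, Nat.cast_one, one_mul,
        Finset.sum_range_one, Nat.choose_self, Nat.add_zero, Nat.sub_zero]
      rw [Finset.sum_range_succ' (fun i => x ^ (m + 1 - i + 1)) (m + 1)]
      simp only [Nat.succ_sub_succ, Nat.sub_zero]
      ring
    | succ k ihk =>
      have step : x ^ (m + 1 + 1) * y ^ (k + 1 + 1)
          = x ^ (m + 1 + 1) * y ^ (k + 1) + x ^ (m + 1) * y ^ (k + 1 + 1) := by
        calc x ^ (m + 1 + 1) * y ^ (k + 1 + 1)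
            = (x * y) * (x ^ (m + 1) * y ^ (k + 1)) := by ring
          _ = (x + y) * (x ^ (m + 1) * y ^ (k + 1)) := by rw [h]
          _ = x ^ (m + 1 + 1) * y ^ (k + 1) + x ^ (m + 1) * y ^ (k + 1 + 1) := by ring
      rw [step, ihk, ihm (k + 1)]
      have hx : (∑ i ∈ Finset.range (m + 1 + 1), ((k + i).choose k : ℝ) * x ^ (m + 1 - i + 1))
          + ∑ i ∈ Finset.range (m + 1), ((k + 1 + i).choose (k + 1) : ℝ) * x ^ (m - i + 1)
          = ∑ i ∈ Finset.range (m + 1 + 1), ((k + 1 + i).choose (k + 1) : ℝ) * x ^ (m + 1 - i + 1) := by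
        rw [Finset.sum_range_succ' (fun i => ((k + i).choose k : ℝ) * x ^ (m + 1 - i + 1)) (m + 1),
          Finset.sum_range_succ' (fun i => ((k + 1 + i).choose (k + 1) : ℝ) * x ^ (m + 1 - i + 1)) (m + 1)]
        simp only [Nat.succ_sub_succ, Nat.sub_zero, Nat.add_zero, Nat.choose_self, Nat.cast_one, one_mul]
        have hsum : (∑ i ∈ Finset.range (m + 1), ((k + (i + 1)).choose k : ℝ) * x ^ (m - i + 1))
            + ∑ i ∈ Finset.range (m + 1), ((k + 1 + i).choose (k + 1) : ℝ) * x ^ (m - i + 1)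
            = ∑ i ∈ Finset.range (m + 1), ((k + 1 + (i + 1)).choose (k + 1) : ℝ) * x ^ (m - i + 1) := by
          rw [← Finset.sum_add_distrib]
          refine Finset.sum_congr rfl fun i hi => ?_
          have hp : ((k + 1 + (i + 1)).choose (k + 1) : ℝ)
              = ((k + 1 + i).choose k : ℝ) + ((k + 1 + i).choose (k + 1) : ℝ) := by
            rw [show k + 1 + (i + 1) = (k + 1 + i) + 1 by ring, Nat.choose_succ_succ]
            push_cast
            ring
          rw [show k + (i + 1) = k + 1 + i by ring, hp]
          ring
        linarith [hsum]
      have hy : (∑ i ∈ Finset.range (k + 1), ((m + 1 + i).choose (m + 1) : ℝ) * y ^ (k - i + 1))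
          + ∑ i ∈ Finset.range (k + 1 + 1), ((m + i).choose m : ℝ) * y ^ (k + 1 - i + 1)
          = ∑ i ∈ Finset.range (k + 1 + 1), ((m + 1 + i).choose (m + 1) : ℝ) * y ^ (k + 1 - i + 1) := by
        rw [Finset.sum_range_succ' (fun i => ((m + i).choose m : ℝ) * y ^ (k + 1 - i + 1)) (k + 1),
          Finset.sum_range_succ' (fun i => ((m + 1 + i).choose (m + 1) : ℝ) * y ^ (k + 1 - i + 1)) (k + 1)]
        simp only [Nat.succ_sub_succ, Nat.sub_zero, Nat.add_zero, Nat.choose_self, Nat.cast_one, one_mul]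
        have hsum : (∑ i ∈ Finset.range (k + 1), ((m + (i + 1)).choose m : ℝ) * y ^ (k - i + 1))
            + ∑ i ∈ Finset.range (k + 1), ((m + 1 + i).choose (m + 1) : ℝ) * y ^ (k - i + 1)
            = ∑ i ∈ Finset.range (k + 1), ((m + 1 + (i + 1)).choose (m + 1) : ℝ) * y ^ (k - i + 1) := by
          rw [← Finset.sum_add_distrib]
          refine Finset.sum_congr rfl fun i hi => ?_
          have hp : ((m + 1 + (i + 1)).choose (m + 1) : ℝ)
              = ((m + 1 + i).choose m : ℝ) + ((m + 1 + i).choose (m + 1) : ℝ) := by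
            rw [show m + 1 + (i + 1) = (m + 1 + i) + 1 by ring, Nat.choose_succ_succ]
            push_cast
            ring
          rw [show m + (i + 1) = m + 1 + i by ring, hp]
          ring
        linarith [hsum]
      linarith [hx, hy]
end

section
/- For all integers m, k ≥ 0 and all nonzero real x, y with x + y ≠ 0, (m! k!)/(x^(m+1) y^(k+1)) = m! k! Σ_{i=0}^{m} C(i+k, k)/(x^(m-i+1)(x+y)^(i+k+1)) + k! m! Σ_{j=0}^{k} C(m+j, m)/(y^(k-j+1)(x+y)^(m+j+1)). -/
open Finset

private lemma geom (k : ℕ) (x y : ℝ) :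
    (x + y) ^ (k + 1) = y ^ (k + 1)
      + x * ∑ j ∈ range (k + 1), y ^ j * (x + y) ^ (k - j) := by
  induction k with
  | zero => simp; ring
  | succ k ih =>
    rw [sum_range_succ]
    have h : ∀ j ∈ range (k + 1),
        y ^ j * (x + y) ^ (k + 1 - j) = (x + y) * (y ^ j * (x + y) ^ (k - j)) := by
      intro j hj
      rw [mem_range] at hj
      have h2 : k + 1 - j = (k - j) + 1 := by omega
      rw [h2]; ring
    rw [sum_congr rfl h, ← mul_sum]
    simp only [Nat.sub_self, pow_zero]
    linear_combination (x + y) * ih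

private lemma qlem (m k : ℕ) (x y : ℝ) :
    x * ∑ j ∈ range (k + 1), (Nat.choose (m + 1 + j) (m + 1) : ℝ) * y ^ j * (x + y) ^ (k - j)
      = (x + y) * ∑ j ∈ range (k + 1), (Nat.choose (m + j) m : ℝ) * y ^ j * (x + y) ^ (k - j)
        - (Nat.choose (m + k + 1) k : ℝ) * y ^ (k + 1) := by
  induction k with
  | zero => simp
  | succ k ih =>
    conv_lhs => rw [sum_range_succ]
    conv_rhs => rw [sum_range_succ]
    have h1 : ∀ j ∈ range (k + 1),
        (Nat.choose (m + 1 + j) (m + 1) : ℝ) * y ^ j * (x + y) ^ (k + 1 - j)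
          = (x + y) * ((Nat.choose (m + 1 + j) (m + 1) : ℝ) * y ^ j * (x + y) ^ (k - j)) := by
      intro j hj
      rw [mem_range] at hj
      have h2 : k + 1 - j = (k - j) + 1 := by omega
      rw [h2]; ring
    have h1' : ∀ j ∈ range (k + 1),
        (Nat.choose (m + j) m : ℝ) * y ^ j * (x + y) ^ (k + 1 - j)
          = (x + y) * ((Nat.choose (m + j) m : ℝ) * y ^ j * (x + y) ^ (k - j)) := by
      intro j hj
      rw [mem_range] at hj
      have h2 : k + 1 - j = (k - j) + 1 := by omega
      rw [h2]; ring
    rw [sum_congr rfl h1, sum_congr rfl h1', ← mul_sum, ← mul_sum]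
    simp only [Nat.sub_self, pow_zero]
    have e1 : (Nat.choose (m + 1 + (k + 1)) (m + 1) : ℝ)
        = (Nat.choose (m + (k + 1)) m : ℝ) + (Nat.choose (m + k + 1) k : ℝ) := by
      have h3 : Nat.choose (m + 1 + (k + 1)) (m + 1)
          = Nat.choose (m + (k + 1)) m + Nat.choose (m + k + 1) k := by
        have hs : Nat.choose (m + k + 1) k = Nat.choose (m + k + 1) (m + 1) := by
          have h4 := Nat.choose_symm (show k ≤ m + k + 1 by omega)
          rw [show m + k + 1 - k = m + 1 from by omega] at h4
          exact h4.symm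
        rw [hs, show m + 1 + (k + 1) = (m + k + 1) + 1 from by omega,
          show m + (k + 1) = m + k + 1 from by omega]
        rw [Nat.choose_succ_succ' (m + k + 1) m]
      exact_mod_cast congrArg (Nat.cast : ℕ → ℝ) h3
    have e2 : (Nat.choose (m + (k + 1) + 1) (k + 1) : ℝ)
        = (Nat.choose (m + 1 + (k + 1)) (m + 1) : ℝ) := by
      have h3 : Nat.choose (m + (k + 1) + 1) (k + 1)
          = Nat.choose (m + 1 + (k + 1)) (m + 1) := by
        have h4 := Nat.choose_symm (show k + 1 ≤ m + k + 2 by omega)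
        rw [show m + k + 2 - (k + 1) = m + 1 from by omega] at h4
        rw [show m + (k + 1) + 1 = m + k + 2 from by omega,
          show m + 1 + (k + 1) = m + k + 2 from by omega]
        exact h4.symm
      exact_mod_cast congrArg (Nat.cast : ℕ → ℝ) h3
    linear_combination (x + y) * ih + ((x + y) * y ^ (k + 1)) * e1 + y ^ (k + 2) * e2

private lemma key (m k : ℕ) (x y : ℝ) :
    (x + y) ^ (m + k + 1)
      = y ^ (k + 1) * ∑ i ∈ range (m + 1),
          (Nat.choose (i + k) k : ℝ) * x ^ i * (x + y) ^ (m - i)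
        + x ^ (m + 1) * ∑ j ∈ range (k + 1),
          (Nat.choose (m + j) m : ℝ) * y ^ j * (x + y) ^ (k - j) := by
  induction m with
  | zero => simpa using geom k x y
  | succ m ih =>
    rw [sum_range_succ]
    have h1 : ∀ i ∈ range (m + 1),
        (Nat.choose (i + k) k : ℝ) * x ^ i * (x + y) ^ (m + 1 - i)
          = (x + y) * ((Nat.choose (i + k) k : ℝ) * x ^ i * (x + y) ^ (m - i)) := by
      intro i hi
      rw [mem_range] at hi
      have h2 : m + 1 - i = (m - i) + 1 := by omega
      rw [h2]; ring
    rw [sum_congr rfl h1, ← mul_sum]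
    simp only [Nat.sub_self, pow_zero]
    have e : (Nat.choose (m + 1 + k) k : ℝ) = (Nat.choose (m + k + 1) k : ℝ) := by
      rw [show m + 1 + k = m + k + 1 from by omega]
    linear_combination (x + y) * ih - x ^ (m + 1) * qlem m k x y
      - x ^ (m + 1) * y ^ (k + 1) * e

theorem two_var_inverse_identity (m k : ℕ) (x y : ℝ) (hx : x ≠ 0) (hy : y ≠ 0)
    (hxy : x + y ≠ 0) :
    ((Nat.factorial m : ℝ) * Nat.factorial k) / (x ^ (m + 1) * y ^ (k + 1))
      = (Nat.factorial m : ℝ) * Nat.factorial k *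
          ∑ i ∈ Finset.range (m + 1),
            (Nat.choose (i + k) k : ℝ) / (x ^ (m - i + 1) * (x + y) ^ (i + k + 1))
      + (Nat.factorial k : ℝ) * Nat.factorial m *
          ∑ j ∈ Finset.range (k + 1),
            (Nat.choose (m + j) m : ℝ) / (y ^ (k - j + 1) * (x + y) ^ (m + j + 1)) := by
  have hs1 : ∑ i ∈ range (m + 1),
      (Nat.choose (i + k) k : ℝ) / (x ^ (m - i + 1) * (x + y) ^ (i + k + 1))
      = (∑ i ∈ range (m + 1), (Nat.choose (i + k) k : ℝ) * x ^ i * (x + y) ^ (m - i))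
        / (x ^ (m + 1) * (x + y) ^ (m + k + 1)) := by
    rw [Finset.sum_div]
    refine sum_congr rfl fun i hi => ?_
    rw [mem_range] at hi
    rw [div_eq_div_iff (by positivity) (by positivity)]
    rw [show m + 1 = (m - i + 1) + i from by omega, show m + k + 1 = (i + k + 1) + (m - i) from by omega,
      pow_add, pow_add]
    ring
  have hs2 : ∑ j ∈ range (k + 1),
      (Nat.choose (m + j) m : ℝ) / (y ^ (k - j + 1) * (x + y) ^ (m + j + 1))
      = (∑ j ∈ range (k + 1), (Nat.choose (m + j) m : ℝ) * y ^ j * (x + y) ^ (k - j))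
        / (y ^ (k + 1) * (x + y) ^ (m + k + 1)) := by
    rw [Finset.sum_div]
    refine sum_congr rfl fun j hj => ?_
    rw [mem_range] at hj
    rw [div_eq_div_iff (by positivity) (by positivity)]
    rw [show k + 1 = (k - j + 1) + j from by omega, show m + k + 1 = (m + j + 1) + (k - j) from by omega,
      pow_add, pow_add]
    ring
  rw [hs1, hs2]
  have hk := key m k x y
  have h2 : (1 : ℝ) / (x ^ (m + 1) * y ^ (k + 1))
      = (∑ i ∈ range (m + 1), (Nat.choose (i + k) k : ℝ) * x ^ i * (x + y) ^ (m - i))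
          / (x ^ (m + 1) * (x + y) ^ (m + k + 1))
        + (∑ j ∈ range (k + 1), (Nat.choose (m + j) m : ℝ) * y ^ j * (x + y) ^ (k - j))
          / (y ^ (k + 1) * (x + y) ^ (m + k + 1)) := by
    rw [div_add_div _ _ (by positivity) (by positivity), div_eq_div_iff (by positivity) (by positivity)]
    linear_combination (x ^ (m + 1) * y ^ (k + 1) * (x + y) ^ (m + k + 1)) * hk
  linear_combination ((m.factorial : ℝ) * (k.factorial : ℝ)) * h2
end

section
/- For all integers m₁, m₂, m₃ ≥ 0 and all real x, y, z satisfying xyz = xy + yz + zx, x^(m₁+1) y^(m₂+1) z^(m₃+1) = Σ_{j≤m₂, k≤m₃} ((m₁+j+k)!/(m₁! j! k!)) y^(m₂-j+1) z^(m₃-k+1) + Σ_{k≤m₃, i≤m₁} ((i+m₂+k)!/(i! m₂! k!)) z^(m₃-k+1) x^(m₁-i+1) + Σ_{i≤m₁, j≤m₂} ((i+j+m₃)!/(i! j! m₃!)) x^(m₁-i+1) y^(m₂-j+1). -/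
open Finset

noncomputable def Cf (i j k : ℕ) : ℝ :=
  (Nat.factorial (i + j + k) : ℝ) /
    (Nat.factorial i * Nat.factorial j * Nat.factorial k)

lemma factR_ne (n : ℕ) : (Nat.factorial n : ℝ) ≠ 0 := by
  exact_mod_cast Nat.factorial_ne_zero n

lemma Cf_symm (i j k : ℕ) : Cf i j k = Cf j k i := by
  unfold Cf
  rw [show i + j + k = j + k + i by ring]
  ring

lemma Cf_zero : Cf 0 0 0 = 1 := by simp [Cf]

lemma P1 (a : ℕ) : Cf (a+1) 0 0 = Cf a 0 0 := by
  simp [Cf, div_self (factR_ne _)]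

lemma P2 (a b : ℕ) : Cf (a+1) (b+1) 0 = Cf a (b+1) 0 + Cf (a+1) b 0 := by
  unfold Cf
  rw [show (a+1) + (b+1) + 0 = (a + (b+1) + 0) + 1 by ring,
      show (a+1) + b + 0 = a + (b+1) + 0 by ring]
  rw [Nat.factorial_succ (a + (b+1) + 0), Nat.factorial_succ a, Nat.factorial_succ b]
  have h1 := factR_ne a
  have h2 := factR_ne b
  have h3 := factR_ne (a + (b+1) + 0)
  push_cast
  field_simp
  ring

lemma P3 (a c : ℕ) : Cf (a+1) 0 (c+1) = Cf a 0 (c+1) + Cf (a+1) 0 c := by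
  unfold Cf
  rw [show (a+1) + 0 + (c+1) = (a + 0 + (c+1)) + 1 by ring,
      show (a+1) + 0 + c = a + 0 + (c+1) by ring]
  rw [Nat.factorial_succ (a + 0 + (c+1)), Nat.factorial_succ a, Nat.factorial_succ c]
  have h1 := factR_ne a
  have h2 := factR_ne c
  have h3 := factR_ne (a + 0 + (c+1))
  push_cast
  field_simp
  ring

lemma P4 (a b c : ℕ) : Cf (a+1) (b+1) (c+1)
    = Cf a (b+1) (c+1) + Cf (a+1) b (c+1) + Cf (a+1) (b+1) c := by
  unfold Cf
  rw [show (a+1) + (b+1) + (c+1) = (a + (b+1) + (c+1)) + 1 by ring,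
      show (a+1) + b + (c+1) = a + (b+1) + (c+1) by ring,
      show (a+1) + (b+1) + c = a + (b+1) + (c+1) by ring]
  rw [Nat.factorial_succ (a + (b+1) + (c+1)), Nat.factorial_succ a,
      Nat.factorial_succ b, Nat.factorial_succ c]
  have h1 := factR_ne a
  have h2 := factR_ne b
  have h3 := factR_ne c
  have h4 := factR_ne (a + (b+1) + (c+1))
  push_cast
  field_simp
  ring
noncomputable def Sf (u v w : ℝ) (a b c : ℕ) : ℝ :=
    (∑ j ∈ Finset.range (b+1), ∑ k ∈ Finset.range (c+1),
        Cf a j k * u^(a+1) * v^j * w^k)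
  + (∑ k ∈ Finset.range (c+1), ∑ i ∈ Finset.range (a+1),
        Cf i b k * u^i * v^(b+1) * w^k)
  + (∑ i ∈ Finset.range (a+1), ∑ j ∈ Finset.range (b+1),
        Cf i j c * u^i * v^j * w^(c+1))

lemma Sf_cyc (u v w : ℝ) (a b c : ℕ) : Sf u v w a b c = Sf v w u b c a := by
  unfold Sf
  have e1 : (∑ j ∈ Finset.range (b+1), ∑ k ∈ Finset.range (c+1),
        Cf a j k * u^(a+1) * v^j * w^k)
      = ∑ i ∈ Finset.range (b+1), ∑ j ∈ Finset.range (c+1),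
        Cf i j a * v^i * w^j * u^(a+1) := by
    refine Finset.sum_congr rfl fun j _ => Finset.sum_congr rfl fun k _ => ?_
    rw [Cf_symm]; ring
  have e2 : (∑ k ∈ Finset.range (c+1), ∑ i ∈ Finset.range (a+1),
        Cf i b k * u^i * v^(b+1) * w^k)
      = ∑ j ∈ Finset.range (c+1), ∑ k ∈ Finset.range (a+1),
        Cf b j k * v^(b+1) * w^j * u^k := by
    refine Finset.sum_congr rfl fun k _ => Finset.sum_congr rfl fun i _ => ?_
    rw [Cf_symm i b k]; ring
  have e3 : (∑ i ∈ Finset.range (a+1), ∑ j ∈ Finset.range (b+1),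
        Cf i j c * u^i * v^j * w^(c+1))
      = ∑ k ∈ Finset.range (a+1), ∑ i ∈ Finset.range (b+1),
        Cf i c k * v^i * w^(c+1) * u^k := by
    refine Finset.sum_congr rfl fun i _ => Finset.sum_congr rfl fun j _ => ?_
    rw [Cf_symm i j c]; ring
  rw [e1, e2, e3]; ring

lemma L2 (a c : ℕ) (w : ℝ) :
    ∑ k ∈ Finset.range (c+1), Cf (a+1) 0 k * w^k
      = (∑ k ∈ Finset.range (c+1), Cf a 0 k * w^k)
        + ∑ k ∈ Finset.range c, Cf (a+1) 0 k * w^(k+1) := by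
  induction c with
  | zero => simp [P1]
  | succ c ih =>
      rw [Finset.sum_range_succ, Finset.sum_range_succ (f := fun k => Cf a 0 k * w^k),
        Finset.sum_range_succ (f := fun k => Cf (a+1) 0 k * w^(k+1))]
      rw [P3 a c]
      linear_combination ih

lemma L1 (a b c : ℕ) (w : ℝ) :
    ∑ k ∈ Finset.range (c+1), Cf (a+1) (b+1) k * w^k
      = (∑ k ∈ Finset.range (c+1), Cf a (b+1) k * w^k)
        + (∑ k ∈ Finset.range (c+1), Cf (a+1) b k * w^k)
        + ∑ k ∈ Finset.range c, Cf (a+1) (b+1) k * w^(k+1) := by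
  induction c with
  | zero => simp [P2]
  | succ c ih =>
      rw [Finset.sum_range_succ, Finset.sum_range_succ (f := fun k => Cf a (b+1) k * w^k),
        Finset.sum_range_succ (f := fun k => Cf (a+1) b k * w^k),
        Finset.sum_range_succ (f := fun k => Cf (a+1) (b+1) k * w^(k+1))]
      rw [P4 a b c]
      linear_combination ih
lemma L2' (a c : ℕ) (s p w : ℝ) :
    ∑ k ∈ Finset.range (c+1), Cf (a+1) 0 k * s * p * w^k
      = (∑ k ∈ Finset.range (c+1), Cf a 0 k * s * p * w^k)
        + ∑ k ∈ Finset.range c, Cf (a+1) 0 k * s * p * w^(k+1) := by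
  induction c with
  | zero =>
      have h1 : (∑ k ∈ Finset.range (0+1), Cf (a+1) 0 k * s * p * w^k)
          = Cf (a+1) 0 0 * s * p * w^0 := Finset.sum_range_one _
      have h2 : (∑ k ∈ Finset.range (0+1), Cf a 0 k * s * p * w^k)
          = Cf a 0 0 * s * p * w^0 := Finset.sum_range_one _
      have h3 : (∑ k ∈ Finset.range 0, Cf (a+1) 0 k * s * p * w^(k+1)) = 0 :=
        Finset.sum_range_zero _
      linear_combination h1 - h2 + h3 + (s * p * w^0) * P1 a
  | succ c ih =>
      have h1 : (∑ k ∈ Finset.range (c+1+1), Cf (a+1) 0 k * s * p * w^k)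
          = (∑ k ∈ Finset.range (c+1), Cf (a+1) 0 k * s * p * w^k)
            + Cf (a+1) 0 (c+1) * s * p * w^(c+1) := Finset.sum_range_succ _ _
      have h2 : (∑ k ∈ Finset.range (c+1+1), Cf a 0 k * s * p * w^k)
          = (∑ k ∈ Finset.range (c+1), Cf a 0 k * s * p * w^k)
            + Cf a 0 (c+1) * s * p * w^(c+1) := Finset.sum_range_succ _ _
      have h3 : (∑ k ∈ Finset.range (c+1), Cf (a+1) 0 k * s * p * w^(k+1))
          = (∑ k ∈ Finset.range c, Cf (a+1) 0 k * s * p * w^(k+1))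
            + Cf (a+1) 0 c * s * p * w^(c+1) := Finset.sum_range_succ _ _
      linear_combination ih + h1 - h2 - h3 + (s * p * w^(c+1)) * P3 a c

lemma L1' (a b c : ℕ) (s p w : ℝ) :
    ∑ k ∈ Finset.range (c+1), Cf (a+1) (b+1) k * s * p * w^k
      = (∑ k ∈ Finset.range (c+1), Cf a (b+1) k * s * p * w^k)
        + (∑ k ∈ Finset.range (c+1), Cf (a+1) b k * s * p * w^k)
        + ∑ k ∈ Finset.range c, Cf (a+1) (b+1) k * s * p * w^(k+1) := by
  induction c with
  | zero =>
      have h1 : (∑ k ∈ Finset.range (0+1), Cf (a+1) (b+1) k * s * p * w^k)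
          = Cf (a+1) (b+1) 0 * s * p * w^0 := Finset.sum_range_one _
      have h2 : (∑ k ∈ Finset.range (0+1), Cf a (b+1) k * s * p * w^k)
          = Cf a (b+1) 0 * s * p * w^0 := Finset.sum_range_one _
      have h2' : (∑ k ∈ Finset.range (0+1), Cf (a+1) b k * s * p * w^k)
          = Cf (a+1) b 0 * s * p * w^0 := Finset.sum_range_one _
      have h3 : (∑ k ∈ Finset.range 0, Cf (a+1) (b+1) k * s * p * w^(k+1)) = 0 :=
        Finset.sum_range_zero _
      linear_combination h1 - h2 - h2' + h3 + (s * p * w^0) * P2 a b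
  | succ c ih =>
      have h1 : (∑ k ∈ Finset.range (c+1+1), Cf (a+1) (b+1) k * s * p * w^k)
          = (∑ k ∈ Finset.range (c+1), Cf (a+1) (b+1) k * s * p * w^k)
            + Cf (a+1) (b+1) (c+1) * s * p * w^(c+1) := Finset.sum_range_succ _ _
      have h2 : (∑ k ∈ Finset.range (c+1+1), Cf a (b+1) k * s * p * w^k)
          = (∑ k ∈ Finset.range (c+1), Cf a (b+1) k * s * p * w^k)
            + Cf a (b+1) (c+1) * s * p * w^(c+1) := Finset.sum_range_succ _ _
      have h2' : (∑ k ∈ Finset.range (c+1+1), Cf (a+1) b k * s * p * w^k)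
          = (∑ k ∈ Finset.range (c+1), Cf (a+1) b k * s * p * w^k)
            + Cf (a+1) b (c+1) * s * p * w^(c+1) := Finset.sum_range_succ _ _
      have h3 : (∑ k ∈ Finset.range (c+1), Cf (a+1) (b+1) k * s * p * w^(k+1))
          = (∑ k ∈ Finset.range c, Cf (a+1) (b+1) k * s * p * w^(k+1))
            + Cf (a+1) (b+1) c * s * p * w^(c+1) := Finset.sum_range_succ _ _
      linear_combination ih + h1 - h2 - h2' - h3 + (s * p * w^(c+1)) * P4 a b c

lemma starstar (a b c : ℕ) (t v w : ℝ) :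
    (∑ j ∈ Finset.range (b+1), ∑ k ∈ Finset.range (c+1), Cf a j k * t * v^j * w^k)
  + (∑ j ∈ Finset.range (b+1), ∑ k ∈ Finset.range (c+1), Cf (a+1) j k * t * v^(j+1) * w^k)
  + (∑ j ∈ Finset.range (b+1), ∑ k ∈ Finset.range (c+1), Cf (a+1) j k * t * v^j * w^(k+1))
  = (∑ j ∈ Finset.range (b+1), ∑ k ∈ Finset.range (c+1), Cf (a+1) j k * t * v^j * w^k)
  + (∑ k ∈ Finset.range (c+1), Cf (a+1) b k * t * v^(b+1) * w^k)
  + (∑ j ∈ Finset.range (b+1), Cf (a+1) j c * t * v^j * w^(c+1)) := by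
  induction b with
  | zero =>
      have a0 : (∑ j ∈ Finset.range (0+1), ∑ k ∈ Finset.range (c+1),
            Cf a j k * t * v^j * w^k)
          = ∑ k ∈ Finset.range (c+1), Cf a 0 k * t * v^0 * w^k := Finset.sum_range_one _
      have b0 : (∑ j ∈ Finset.range (0+1), ∑ k ∈ Finset.range (c+1),
            Cf (a+1) j k * t * v^(j+1) * w^k)
          = ∑ k ∈ Finset.range (c+1), Cf (a+1) 0 k * t * v^(0+1) * w^k :=
        Finset.sum_range_one _
      have d0 : (∑ j ∈ Finset.range (0+1), ∑ k ∈ Finset.range (c+1),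
            Cf (a+1) j k * t * v^j * w^(k+1))
          = ∑ k ∈ Finset.range (c+1), Cf (a+1) 0 k * t * v^0 * w^(k+1) :=
        Finset.sum_range_one _
      have e0 : (∑ j ∈ Finset.range (0+1), ∑ k ∈ Finset.range (c+1),
            Cf (a+1) j k * t * v^j * w^k)
          = ∑ k ∈ Finset.range (c+1), Cf (a+1) 0 k * t * v^0 * w^k := Finset.sum_range_one _
      have g0 : (∑ j ∈ Finset.range (0+1), Cf (a+1) j c * t * v^j * w^(c+1))
          = Cf (a+1) 0 c * t * v^0 * w^(c+1) := Finset.sum_range_one _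
      have sD0 : (∑ k ∈ Finset.range (c+1), Cf (a+1) 0 k * t * v^0 * w^(k+1))
          = (∑ k ∈ Finset.range c, Cf (a+1) 0 k * t * v^0 * w^(k+1))
            + Cf (a+1) 0 c * t * v^0 * w^(c+1) := Finset.sum_range_succ _ _
      linear_combination a0 + b0 + d0 - e0 - g0 + sD0 - L2' a c t (v^0) w
  | succ b ih =>
      have sA : (∑ j ∈ Finset.range (b+1+1), ∑ k ∈ Finset.range (c+1),
            Cf a j k * t * v^j * w^k)
          = (∑ j ∈ Finset.range (b+1), ∑ k ∈ Finset.range (c+1),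
              Cf a j k * t * v^j * w^k)
            + ∑ k ∈ Finset.range (c+1), Cf a (b+1) k * t * v^(b+1) * w^k :=
        Finset.sum_range_succ _ _
      have sB : (∑ j ∈ Finset.range (b+1+1), ∑ k ∈ Finset.range (c+1),
            Cf (a+1) j k * t * v^(j+1) * w^k)
          = (∑ j ∈ Finset.range (b+1), ∑ k ∈ Finset.range (c+1),
              Cf (a+1) j k * t * v^(j+1) * w^k)
            + ∑ k ∈ Finset.range (c+1), Cf (a+1) (b+1) k * t * v^(b+1+1) * w^k :=
        Finset.sum_range_succ _ _
      have sD : (∑ j ∈ Finset.range (b+1+1), ∑ k ∈ Finset.range (c+1),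
            Cf (a+1) j k * t * v^j * w^(k+1))
          = (∑ j ∈ Finset.range (b+1), ∑ k ∈ Finset.range (c+1),
              Cf (a+1) j k * t * v^j * w^(k+1))
            + ∑ k ∈ Finset.range (c+1), Cf (a+1) (b+1) k * t * v^(b+1) * w^(k+1) :=
        Finset.sum_range_succ _ _
      have sE : (∑ j ∈ Finset.range (b+1+1), ∑ k ∈ Finset.range (c+1),
            Cf (a+1) j k * t * v^j * w^k)
          = (∑ j ∈ Finset.range (b+1), ∑ k ∈ Finset.range (c+1),
              Cf (a+1) j k * t * v^j * w^k)
            + ∑ k ∈ Finset.range (c+1), Cf (a+1) (b+1) k * t * v^(b+1) * w^k :=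
        Finset.sum_range_succ _ _
      have sG : (∑ j ∈ Finset.range (b+1+1), Cf (a+1) j c * t * v^j * w^(c+1))
          = (∑ j ∈ Finset.range (b+1), Cf (a+1) j c * t * v^j * w^(c+1))
            + Cf (a+1) (b+1) c * t * v^(b+1) * w^(c+1) := Finset.sum_range_succ _ _
      have sDD : (∑ k ∈ Finset.range (c+1), Cf (a+1) (b+1) k * t * v^(b+1) * w^(k+1))
          = (∑ k ∈ Finset.range c, Cf (a+1) (b+1) k * t * v^(b+1) * w^(k+1))
            + Cf (a+1) (b+1) c * t * v^(b+1) * w^(c+1) := Finset.sum_range_succ _ _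
      linear_combination sA + sB + sD - sE - sG + ih + sDD - L1' a b c t (v^(b+1)) w
lemma Sf_step (u v w : ℝ) (hu : u + v + w = 1) (a b c : ℕ) :
    Sf u v w (a+1) b c = Sf u v w a b c := by
  unfold Sf
  have h1 : (∑ j ∈ Finset.range (b+1), ∑ k ∈ Finset.range (c+1),
        Cf (a+1) j k * u^(a+1+1) * v^j * w^k)
      = (∑ j ∈ Finset.range (b+1), ∑ k ∈ Finset.range (c+1),
          Cf (a+1) j k * u^(a+1) * v^j * w^k)
        - (∑ j ∈ Finset.range (b+1), ∑ k ∈ Finset.range (c+1),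
          Cf (a+1) j k * u^(a+1) * v^(j+1) * w^k)
        - (∑ j ∈ Finset.range (b+1), ∑ k ∈ Finset.range (c+1),
          Cf (a+1) j k * u^(a+1) * v^j * w^(k+1)) := by
    rw [← Finset.sum_sub_distrib, ← Finset.sum_sub_distrib]
    refine Finset.sum_congr rfl fun j _ => ?_
    rw [← Finset.sum_sub_distrib, ← Finset.sum_sub_distrib]
    refine Finset.sum_congr rfl fun k _ => ?_
    linear_combination (Cf (a+1) j k * u^(a+1) * v^j * w^k) * hu
  have h2 : (∑ k ∈ Finset.range (c+1), ∑ i ∈ Finset.range (a+1+1),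
        Cf i b k * u^i * v^(b+1) * w^k)
      = (∑ k ∈ Finset.range (c+1), ∑ i ∈ Finset.range (a+1),
          Cf i b k * u^i * v^(b+1) * w^k)
        + ∑ k ∈ Finset.range (c+1), Cf (a+1) b k * u^(a+1) * v^(b+1) * w^k := by
    rw [← Finset.sum_add_distrib]
    exact Finset.sum_congr rfl fun k _ => Finset.sum_range_succ _ _
  have h3 : (∑ i ∈ Finset.range (a+1+1), ∑ j ∈ Finset.range (b+1),
        Cf i j c * u^i * v^j * w^(c+1))
      = (∑ i ∈ Finset.range (a+1), ∑ j ∈ Finset.range (b+1),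
          Cf i j c * u^i * v^j * w^(c+1))
        + ∑ j ∈ Finset.range (b+1), Cf (a+1) j c * u^(a+1) * v^j * w^(c+1) :=
    Finset.sum_range_succ _ _
  linear_combination h1 + h2 + h3 - starstar a b c (u^(a+1)) v w

lemma Sf_zero_first (u v w : ℝ) (hu : u + v + w = 1) (b c : ℕ) (a : ℕ) :
    Sf u v w a b c = Sf u v w 0 b c := by
  induction a with
  | zero => rfl
  | succ a ih => rw [Sf_step u v w hu a b c, ih]

lemma Sf_one (u v w : ℝ) (hu : u + v + w = 1) (a b c : ℕ) :
    Sf u v w a b c = 1 := by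
  have hv : v + w + u = 1 := by linarith
  have hw : w + u + v = 1 := by linarith
  have base : ∀ p q r : ℝ, Sf p q r 0 0 0 = p + q + r := by
    intro p q r
    unfold Sf
    simp [Cf_zero]
  rw [Sf_zero_first u v w hu b c a, Sf_cyc, Sf_zero_first v w u hv c 0 b, Sf_cyc,
    Sf_zero_first w u v hw 0 0 c, base]
  linarith
lemma pow_sub_helper {y : ℝ} (hy : y ≠ 0) {j m : ℕ} (hj : j ≤ m) :
    y ^ (m - j + 1) = y ^ (m + 1) * (y⁻¹) ^ j := by
  rw [inv_pow, eq_mul_inv_iff_mul_eq₀ (pow_ne_zero _ hy), ← pow_add]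
  congr 1
  omega

theorem three_var_gkp (m₁ m₂ m₃ : ℕ) (x y z : ℝ) (h : x * y * z = x * y + y * z + z * x) :
    x ^ (m₁ + 1) * y ^ (m₂ + 1) * z ^ (m₃ + 1)
      = (∑ j ∈ Finset.range (m₂ + 1), ∑ k ∈ Finset.range (m₃ + 1),
          ((Nat.factorial (m₁ + j + k) : ℝ) /
            (Nat.factorial m₁ * Nat.factorial j * Nat.factorial k)) *
            y ^ (m₂ - j + 1) * z ^ (m₃ - k + 1))
      + (∑ k ∈ Finset.range (m₃ + 1), ∑ i ∈ Finset.range (m₁ + 1),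
          ((Nat.factorial (i + m₂ + k) : ℝ) /
            (Nat.factorial i * Nat.factorial m₂ * Nat.factorial k)) *
            z ^ (m₃ - k + 1) * x ^ (m₁ - i + 1))
      + (∑ i ∈ Finset.range (m₁ + 1), ∑ j ∈ Finset.range (m₂ + 1),
          ((Nat.factorial (i + j + m₃) : ℝ) /
            (Nat.factorial i * Nat.factorial j * Nat.factorial m₃)) *
            x ^ (m₁ - i + 1) * y ^ (m₂ - j + 1)) := by
  by_cases hx : x = 0
  · subst hx
    simp only [zero_mul, mul_zero, zero_add, add_zero] at h
    rcases mul_eq_zero.mp h.symm with hy | hz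
    · subst hy; simp [zero_pow]
    · subst hz; simp [zero_pow]
  by_cases hy : y = 0
  · subst hy
    simp only [zero_mul, mul_zero, zero_add, add_zero] at h
    have hz : z = 0 := by
      rcases mul_eq_zero.mp h.symm with h' | h'
      · exact h'
      · exact absurd h' hx
    subst hz; simp [zero_pow]
  by_cases hz : z = 0
  · subst hz
    simp only [zero_mul, mul_zero, zero_add, add_zero] at h
    rcases mul_eq_zero.mp h.symm with h' | h'
    · exact absurd h' hx
    · exact absurd h' hy
  -- main case
  have hu : x⁻¹ + y⁻¹ + z⁻¹ = 1 := by
    field_simp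
    linear_combination -h
  have hS := Sf_one x⁻¹ y⁻¹ z⁻¹ hu m₁ m₂ m₃
  have key : x ^ (m₁ + 1) * y ^ (m₂ + 1) * z ^ (m₃ + 1)
      = x ^ (m₁ + 1) * y ^ (m₂ + 1) * z ^ (m₃ + 1) * Sf x⁻¹ y⁻¹ z⁻¹ m₁ m₂ m₃ := by
    rw [hS, mul_one]
  rw [key]
  unfold Sf
  rw [mul_add, mul_add]
  congr 1
  · congr 1
    · rw [Finset.mul_sum]
      refine Finset.sum_congr rfl fun j hj => ?_
      rw [Finset.mul_sum]
      refine Finset.sum_congr rfl fun k hk => ?_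
      have hj' : j ≤ m₂ := Nat.lt_succ_iff.mp (Finset.mem_range.mp hj)
      have hk' : k ≤ m₃ := Nat.lt_succ_iff.mp (Finset.mem_range.mp hk)
      rw [pow_sub_helper hy hj', pow_sub_helper hz hk']
      have hx1 : x ^ (m₁ + 1) * (x⁻¹) ^ (m₁ + 1) = 1 := by
        rw [inv_pow, mul_inv_cancel₀ (pow_ne_zero _ hx)]
      unfold Cf
      linear_combination (((Nat.factorial (m₁ + j + k) : ℝ) /
            (Nat.factorial m₁ * Nat.factorial j * Nat.factorial k))
          * (y⁻¹) ^ j * (z⁻¹) ^ k * y ^ (m₂ + 1) * z ^ (m₃ + 1)) * hx1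
    · rw [Finset.mul_sum]
      refine Finset.sum_congr rfl fun k hk => ?_
      rw [Finset.mul_sum]
      refine Finset.sum_congr rfl fun i hi => ?_
      have hk' : k ≤ m₃ := Nat.lt_succ_iff.mp (Finset.mem_range.mp hk)
      have hi' : i ≤ m₁ := Nat.lt_succ_iff.mp (Finset.mem_range.mp hi)
      rw [pow_sub_helper hz hk', pow_sub_helper hx hi']
      have hy1 : y ^ (m₂ + 1) * (y⁻¹) ^ (m₂ + 1) = 1 := by
        rw [inv_pow, mul_inv_cancel₀ (pow_ne_zero _ hy)]
      unfold Cf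
      linear_combination (((Nat.factorial (i + m₂ + k) : ℝ) /
            (Nat.factorial i * Nat.factorial m₂ * Nat.factorial k))
          * (x⁻¹) ^ i * (z⁻¹) ^ k * x ^ (m₁ + 1) * z ^ (m₃ + 1)) * hy1
  · rw [Finset.mul_sum]
    refine Finset.sum_congr rfl fun i hi => ?_
    rw [Finset.mul_sum]
    refine Finset.sum_congr rfl fun j hj => ?_
    have hi' : i ≤ m₁ := Nat.lt_succ_iff.mp (Finset.mem_range.mp hi)
    have hj' : j ≤ m₂ := Nat.lt_succ_iff.mp (Finset.mem_range.mp hj)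
    rw [pow_sub_helper hx hi', pow_sub_helper hy hj']
    have hz1 : z ^ (m₃ + 1) * (z⁻¹) ^ (m₃ + 1) = 1 := by
      rw [inv_pow, mul_inv_cancel₀ (pow_ne_zero _ hz)]
    unfold Cf
    linear_combination (((Nat.factorial (i + j + m₃) : ℝ) /
          (Nat.factorial i * Nat.factorial j * Nat.factorial m₃))
        * (x⁻¹) ^ i * (y⁻¹) ^ j * x ^ (m₁ + 1) * y ^ (m₂ + 1)) * hz1
end

section
/- For all positive integers n and nonnegative integers m₁, ..., mₙ, and all real u₁, ..., uₙ, (u₁ + ⋯ + uₙ)^(m₁+⋯+mₙ+1) = Σ_{t=1}^{n} u_t^(m_t+1) Σ_{0 ≤ i_j ≤ m_j for j ≠ t} [( (Σ_{j≠t} i_j) + m_t )! / ( m_t! ∏_{j≠t} i_j! )] · (∏_{j≠t} u_j^(i_j)) · (u₁ + ⋯ + uₙ)^(Σ_{j≠t}(m_j - i_j)). -/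
open Finset

namespace CBaux
variable {n : ℕ}

lemma prod_comp_update {M : Type*} [CommMonoid M] (g : Fin n → ℕ → M) (k : Fin n → ℕ)
    (t : Fin n) (v : ℕ) :
    ∏ j, g j (Function.update k t v j) = g t v * ∏ j ∈ univ.erase t, g j (k j) := by
  rw [← Finset.mul_prod_erase _ _ (Finset.mem_univ t)]
  congr 1
  · simp
  · exact Finset.prod_congr rfl fun j hj => by
      rw [Function.update_of_ne (Finset.mem_erase.mp hj).1]

lemma sum_comp_update (k : Fin n → ℕ) (t : Fin n) (v : ℕ) :
    ∑ j, Function.update k t v j = v + ∑ j ∈ univ.erase t, k j := by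
  rw [← Finset.add_sum_erase _ _ (Finset.mem_univ t)]
  congr 1
  · simp
  · exact Finset.sum_congr rfl fun j hj => by
      rw [Function.update_of_ne (Finset.mem_erase.mp hj).1]

lemma prod_erase_update {M : Type*} [CommMonoid M] (g : Fin n → ℕ → M) (k : Fin n → ℕ)
    (t : Fin n) (v : ℕ) :
    ∏ j ∈ univ.erase t, g j (Function.update k t v j) = ∏ j ∈ univ.erase t, g j (k j) :=
  Finset.prod_congr rfl fun j hj => by
    rw [Function.update_of_ne (Finset.mem_erase.mp hj).1]

lemma sum_erase_update (k : Fin n → ℕ) (t : Fin n) (v : ℕ) :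
    ∑ j ∈ univ.erase t, (Function.update k t v) j = ∑ j ∈ univ.erase t, k j :=
  Finset.sum_congr rfl fun j hj => by
    rw [Function.update_of_ne (Finset.mem_erase.mp hj).1]

variable (m : Fin n → ℕ) (u : Fin n → ℝ)

def idx (t : Fin n) : Finset (Fin n → ℕ) :=
  Fintype.piFinset (fun j => Finset.range (if j = t then 1 else m j + 1))

def boxS : Finset (Fin n → ℕ) := Fintype.piFinset (fun j => Finset.range (m j + 1))

def w (t : Fin n) (i : Fin n → ℕ) : ℕ := m t + 1 + ∑ j ∈ univ.erase t, i j

noncomputable def c (t : Fin n) (i : Fin n → ℕ) : ℝ :=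
  (((∑ j ∈ univ.erase t, i j) + m t).factorial : ℝ) /
    ((m t).factorial * ∏ j ∈ univ.erase t, ((i j).factorial : ℝ))

noncomputable def P (N : ℕ) : ℝ :=
  ∑ t, ∑ i ∈ idx m t,
    if w m t i ≤ N then
      c m t i * u t ^ (m t + 1) * (∏ j ∈ univ.erase t, u j ^ i j) * (∑ j, u j) ^ (N - w m t i)
    else 0

noncomputable def Q (N : ℕ) : ℝ :=
  ∑ k ∈ boxS m,
    if (∑ j, k j) = N then ((N.factorial : ℝ) / ∏ j, ((k j).factorial : ℝ)) * ∏ j, u j ^ k j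
    else 0

noncomputable def A (N : ℕ) : ℝ :=
  ∑ t, ∑ i ∈ idx m t,
    if w m t i = N + 1 then
      c m t i * u t ^ (m t + 1) * (∏ j ∈ univ.erase t, u j ^ i j)
    else 0

lemma step1 (N : ℕ) : P m u (N + 1) = (∑ j, u j) * P m u N + A m u N := by
  unfold P A
  rw [Finset.mul_sum, ← Finset.sum_add_distrib]
  refine Finset.sum_congr rfl fun t _ => ?_
  rw [Finset.mul_sum, ← Finset.sum_add_distrib]
  refine Finset.sum_congr rfl fun i _ => ?_
  by_cases h1 : w m t i ≤ N
  · rw [if_pos (by omega), if_pos h1, if_neg (by omega), add_zero]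
    have h2 : N + 1 - w m t i = (N - w m t i) + 1 := by omega
    rw [h2, pow_succ]
    ring
  · by_cases h2 : w m t i = N + 1
    · rw [if_pos (by omega), if_neg h1, if_pos h2, h2, mul_zero, zero_add]
      simp
    · rw [if_neg (by omega), if_neg h1, if_neg h2]
      simp

lemma partA (N : ℕ) (t : Fin n) :
    ∑ k ∈ boxS m, (if (∑ j, k j) = N ∧ k t = m t then
        ((N.factorial : ℝ) / ∏ j, ((k j).factorial : ℝ)) * (∏ j, u j ^ k j) * u t else 0)
      = ∑ i ∈ idx m t, if w m t i = N + 1 then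
          c m t i * u t ^ (m t + 1) * (∏ j ∈ univ.erase t, u j ^ i j) else 0 := by
  rw [← Finset.sum_filter, ← Finset.sum_filter]
  refine Finset.sum_nbij' (fun k => Function.update k t 0)
    (fun i => Function.update i t (m t)) ?_ ?_ ?_ ?_ ?_
  · intro k hk
    rw [Finset.mem_filter] at hk
    obtain ⟨hbox, hsum, hkt⟩ := hk
    beta_reduce
    rw [Finset.mem_filter]
    constructor
    · rw [idx, Fintype.mem_piFinset]
      intro j
      by_cases hj : j = t
      · subst hj; simp
      · rw [Function.update_of_ne hj, if_neg hj]
        exact (Fintype.mem_piFinset.mp hbox) j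
    · have e1 := sum_erase_update k t 0
      have e2 : k t + ∑ j ∈ univ.erase t, k j = ∑ j, k j :=
        Finset.add_sum_erase _ _ (Finset.mem_univ t)
      rw [w, e1]
      omega
  · intro i hi
    rw [Finset.mem_filter] at hi
    obtain ⟨hidx, hw⟩ := hi
    have hit : i t = 0 := by
      have := (Fintype.mem_piFinset.mp hidx) t
      simpa using this
    beta_reduce
    rw [Finset.mem_filter]
    refine ⟨?_, ?_, ?_⟩
    · rw [boxS, Fintype.mem_piFinset]
      intro j
      by_cases hj : j = t
      · subst hj; simp
      · rw [Function.update_of_ne hj]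
        have := (Fintype.mem_piFinset.mp hidx) j
        rwa [if_neg hj] at this
    · have e1 := sum_erase_update i t (m t)
      have e2 : Function.update i t (m t) t + ∑ j ∈ univ.erase t, Function.update i t (m t) j
          = ∑ j, Function.update i t (m t) j :=
        Finset.add_sum_erase _ _ (Finset.mem_univ t)
      rw [w] at hw
      rw [← e2, e1, Function.update_self]
      omega
    · rw [Function.update_self]
  · intro k hk
    rw [Finset.mem_filter] at hk
    have hkt : k t = m t := hk.2.2
    beta_reduce
    rw [Function.update_idem, ← hkt, Function.update_eq_self]
  · intro i hi
    rw [Finset.mem_filter] at hi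
    have hit : i t = 0 := by
      have := (Fintype.mem_piFinset.mp hi.1) t
      simpa using this
    beta_reduce
    rw [Function.update_idem, ← hit, Function.update_eq_self]
  · intro k hk
    rw [Finset.mem_filter] at hk
    obtain ⟨hbox, hsum, hkt⟩ := hk
    beta_reduce
    have e2 : k t + ∑ j ∈ univ.erase t, k j = ∑ j, k j :=
      Finset.add_sum_erase _ _ (Finset.mem_univ t)
    have hnum : (∑ j ∈ univ.erase t, Function.update k t 0 j) + m t = N := by
      rw [sum_erase_update]; omega
    rw [c, hnum, prod_erase_update (fun j v => ((v.factorial : ℝ))),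
      prod_erase_update (fun j v => u j ^ v)]
    have hfac : ∏ j, ((k j).factorial : ℝ)
        = ((m t).factorial : ℝ) * ∏ j ∈ univ.erase t, ((k j).factorial : ℝ) := by
      rw [← Finset.mul_prod_erase _ _ (Finset.mem_univ t), hkt]
    have hu : ∏ j, u j ^ k j = u t ^ m t * ∏ j ∈ univ.erase t, u j ^ k j := by
      rw [← Finset.mul_prod_erase _ _ (Finset.mem_univ t), hkt]
    rw [hfac, hu, pow_succ]
    ring

lemma partB (N : ℕ) (r : Fin n) :
    ∑ k ∈ boxS m, (if (∑ j, k j) = N ∧ k r ≠ m r then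
        ((N.factorial : ℝ) / ∏ j, ((k j).factorial : ℝ)) * (∏ j, u j ^ k j) * u r else 0)
      = ∑ k ∈ boxS m, (if (∑ j, k j) = N + 1 then
          (k r : ℝ) * (((N.factorial : ℝ) / ∏ j, ((k j).factorial : ℝ)) * ∏ j, u j ^ k j)
          else 0) := by
  have stage1 :
      ∑ k ∈ boxS m, (if (∑ j, k j) = N ∧ k r ≠ m r then
        ((N.factorial : ℝ) / ∏ j, ((k j).factorial : ℝ)) * (∏ j, u j ^ k j) * u r else 0)
      = ∑ k ∈ boxS m, (if (∑ j, k j) = N + 1 ∧ 1 ≤ k r then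
          (k r : ℝ) * (((N.factorial : ℝ) / ∏ j, ((k j).factorial : ℝ)) * ∏ j, u j ^ k j)
          else 0) := by
    rw [← Finset.sum_filter, ← Finset.sum_filter]
    refine Finset.sum_nbij' (fun k => Function.update k r (k r + 1))
      (fun k => Function.update k r (k r - 1)) ?_ ?_ ?_ ?_ ?_
    · intro k hk
      rw [Finset.mem_filter] at hk
      obtain ⟨hbox, hsum, hkr⟩ := hk
      have hklt : k r < m r := by
        have := (Fintype.mem_piFinset.mp hbox) r
        rw [Finset.mem_range] at this
        omega
      beta_reduce
      rw [Finset.mem_filter]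
      refine ⟨?_, ?_, ?_⟩
      · rw [boxS, Fintype.mem_piFinset]
        intro j
        by_cases hj : j = r
        · subst hj; rw [Function.update_self, Finset.mem_range]; omega
        · rw [Function.update_of_ne hj]
          exact (Fintype.mem_piFinset.mp hbox) j
      · rw [sum_comp_update]
        have e2 : k r + ∑ j ∈ univ.erase r, k j = ∑ j, k j :=
          Finset.add_sum_erase _ _ (Finset.mem_univ r)
        omega
      · rw [Function.update_self]; omega
    · intro k hk
      rw [Finset.mem_filter] at hk
      obtain ⟨hbox, hsum, hkr⟩ := hk
      have hkle : k r ≤ m r := by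
        have := (Fintype.mem_piFinset.mp hbox) r
        rw [Finset.mem_range] at this
        omega
      beta_reduce
      rw [Finset.mem_filter]
      refine ⟨?_, ?_, ?_⟩
      · rw [boxS, Fintype.mem_piFinset]
        intro j
        by_cases hj : j = r
        · subst hj; rw [Function.update_self, Finset.mem_range]; omega
        · rw [Function.update_of_ne hj]
          exact (Fintype.mem_piFinset.mp hbox) j
      · rw [sum_comp_update]
        have e2 : k r + ∑ j ∈ univ.erase r, k j = ∑ j, k j :=
          Finset.add_sum_erase _ _ (Finset.mem_univ r)
        omega
      · rw [Function.update_self]; omega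
    · intro k hk
      beta_reduce
      rw [Function.update_self, Function.update_idem]
      have : k r + 1 - 1 = k r := by omega
      rw [this, Function.update_eq_self]
    · intro k hk
      rw [Finset.mem_filter] at hk
      have hkr : 1 ≤ k r := hk.2.2
      beta_reduce
      rw [Function.update_self, Function.update_idem]
      have : k r - 1 + 1 = k r := by omega
      rw [this, Function.update_eq_self]
    · intro k hk
      rw [Finset.mem_filter] at hk
      obtain ⟨hbox, hsum, hkr⟩ := hk
      beta_reduce
      rw [Function.update_self,
        prod_comp_update (fun j v => ((v.factorial : ℝ))),
        prod_comp_update (fun j v => u j ^ v)]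
      have hfac : ∏ j, ((k j).factorial : ℝ)
          = ((k r).factorial : ℝ) * ∏ j ∈ univ.erase r, ((k j).factorial : ℝ) :=
        (Finset.mul_prod_erase _ _ (Finset.mem_univ r)).symm
      have hu : ∏ j, u j ^ k j = u r ^ k r * ∏ j ∈ univ.erase r, u j ^ k j :=
        (Finset.mul_prod_erase _ _ (Finset.mem_univ r)).symm
      rw [hfac, hu, Nat.factorial_succ, pow_succ]
      have h1 : ((k r).factorial : ℝ) ≠ 0 := by
        exact_mod_cast (Nat.factorial_ne_zero _)
      have h2 : (∏ j ∈ univ.erase r, ((k j).factorial : ℝ)) ≠ 0 := by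
        refine Finset.prod_ne_zero_iff.mpr fun j _ => ?_
        exact_mod_cast (Nat.factorial_ne_zero _)
      have h3 : ((k r : ℝ) + 1) ≠ 0 := by positivity
      push_cast
      field_simp
  rw [stage1]
  refine Finset.sum_congr rfl fun k _ => ?_
  by_cases h1 : (∑ j, k j) = N + 1
  · by_cases h2 : 1 ≤ k r
    · rw [if_pos ⟨h1, h2⟩, if_pos h1]
    · have : k r = 0 := by omega
      rw [if_neg (by tauto), if_pos h1, this]
      simp
  · rw [if_neg (by tauto), if_neg h1]


lemma coefsum (N : ℕ) (k : Fin n → ℕ) (h : (∑ j, k j) = N + 1) :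
    ∑ r, (k r : ℝ) * (((N.factorial : ℝ) / ∏ j, ((k j).factorial : ℝ)) * ∏ j, u j ^ k j)
      = (((N + 1).factorial : ℝ) / ∏ j, ((k j).factorial : ℝ)) * ∏ j, u j ^ k j := by
  rw [← Finset.sum_mul]
  have hs : ∑ r, (k r : ℝ) = (N : ℝ) + 1 := by
    rw [← Nat.cast_sum, h]
    push_cast
    ring
  rw [hs, Nat.factorial_succ]
  push_cast
  ring


lemma Qsplit (N : ℕ) :
    (∑ j, u j) * Q m u N
      = (∑ t, ∑ k ∈ boxS m, if (∑ j, k j) = N ∧ k t = m t then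
          ((N.factorial : ℝ) / ∏ j, ((k j).factorial : ℝ)) * (∏ j, u j ^ k j) * u t else 0)
      + (∑ r, ∑ k ∈ boxS m, if (∑ j, k j) = N ∧ k r ≠ m r then
          ((N.factorial : ℝ) / ∏ j, ((k j).factorial : ℝ)) * (∏ j, u j ^ k j) * u r else 0) := by
  rw [Finset.sum_mul, ← Finset.sum_add_distrib]
  refine Finset.sum_congr rfl fun r _ => ?_
  rw [Q, Finset.mul_sum, ← Finset.sum_add_distrib]
  refine Finset.sum_congr rfl fun k _ => ?_
  by_cases h1 : (∑ j, k j) = N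
  · by_cases h2 : k r = m r
    · rw [if_pos h1, if_pos ⟨h1, h2⟩, if_neg (by tauto), add_zero]
      ring
    · rw [if_pos h1, if_neg (by tauto), if_pos ⟨h1, h2⟩, zero_add]
      ring
  · rw [if_neg h1, if_neg (by tauto), if_neg (by tauto), mul_zero, add_zero]

lemma Bsum (N : ℕ) :
    (∑ r : Fin n, ∑ k ∈ boxS m, if (∑ j, k j) = N + 1 then
        (k r : ℝ) * (((N.factorial : ℝ) / ∏ j, ((k j).factorial : ℝ)) * ∏ j, u j ^ k j)
        else 0)
      = Q m u (N + 1) := by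
  rw [Finset.sum_comm, Q]
  refine Finset.sum_congr rfl fun k _ => ?_
  by_cases h1 : (∑ j, k j) = N + 1
  · simp only [if_pos h1]
    exact coefsum u N k h1
  · simp only [if_neg h1, Finset.sum_const_zero]


lemma step2 (N : ℕ) : (∑ j, u j) * Q m u N = A m u N + Q m u (N + 1) := by
  rw [Qsplit, A]
  congr 1
  · exact Finset.sum_congr rfl fun t _ => partA m u N t
  · rw [← Bsum m u N]
    exact Finset.sum_congr rfl fun r _ => partB m u N r

theorem key (N : ℕ) : (∑ j, u j) ^ N = P m u N + Q m u N := by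
  induction N with
  | zero =>
    have hP : P m u 0 = 0 := by
      unfold P
      refine Finset.sum_eq_zero fun t _ => Finset.sum_eq_zero fun i _ => ?_
      rw [if_neg]
      unfold w
      omega
    have hQ : Q m u 0 = 1 := by
      unfold Q
      rw [Finset.sum_eq_single_of_mem (fun _ => 0)]
      · simp
      · simp [boxS, Fintype.mem_piFinset]
      · intro k _ hk
        rw [if_neg]
        intro hc
        exact hk (funext fun j => by
          have := Finset.sum_eq_zero_iff.mp hc j (Finset.mem_univ j)
          simpa using this)
    rw [pow_zero, hP, hQ, zero_add]
  | succ N ih =>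
    calc (∑ j, u j) ^ (N + 1) = (∑ j, u j) * (P m u N + Q m u N) := by
          rw [pow_succ, ih]; ring
      _ = ((∑ j, u j) * P m u N + A m u N) + Q m u (N + 1) := by
          rw [mul_add, step2]; ring
      _ = P m u (N + 1) + Q m u (N + 1) := by rw [← step1]

end CBaux

theorem n_var_chaundy_bullard (n : ℕ) (hn : 0 < n) (m : Fin n → ℕ) (u : Fin n → ℝ) :
    (∑ j, u j) ^ ((∑ j, m j) + 1)
      = ∑ t, (u t) ^ (m t + 1) *
          ∑ i ∈ Fintype.piFinset (fun j => Finset.range (if j = t then 1 else m j + 1)),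
            ((Nat.factorial ((∑ j ∈ Finset.univ.erase t, i j) + m t) : ℝ) /
              (Nat.factorial (m t) * ∏ j ∈ Finset.univ.erase t, Nat.factorial (i j))) *
            (∏ j ∈ Finset.univ.erase t, u j ^ i j) *
            (∑ j, u j) ^ (∑ j ∈ Finset.univ.erase t, (m j - i j)) := by
  have h := CBaux.key m u ((∑ j, m j) + 1)
  have hQ : CBaux.Q m u ((∑ j, m j) + 1) = 0 := by
    unfold CBaux.Q
    apply Finset.sum_eq_zero
    intro k hk
    rw [if_neg]
    intro hc
    have h1 : ∀ j, k j ≤ m j := by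
      intro j
      have := (Fintype.mem_piFinset.mp hk) j
      simpa [Nat.lt_succ_iff] using this
    have h2 : (∑ j, k j) ≤ ∑ j, m j := Finset.sum_le_sum fun j _ => h1 j
    omega
  rw [h, hQ, add_zero]
  unfold CBaux.P
  apply Finset.sum_congr rfl
  intro t _
  rw [Finset.mul_sum]
  apply Finset.sum_congr rfl
  intro i hi
  have hle : ∀ j ∈ univ.erase t, i j ≤ m j := by
    intro j hj
    have := (Fintype.mem_piFinset.mp hi) j
    rw [Finset.mem_erase] at hj
    simp only [if_neg hj.1, Finset.mem_range, Nat.lt_succ_iff] at this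
    exact this
  have hsum : ∑ j, m j = m t + ∑ j ∈ univ.erase t, m j := by
    rw [← Finset.add_sum_erase _ _ (Finset.mem_univ t)]
  have hw : CBaux.w m t i ≤ (∑ j, m j) + 1 := by
    unfold CBaux.w
    have := Finset.sum_le_sum hle
    omega
  rw [if_pos hw]
  have hexp : (∑ j, m j) + 1 - CBaux.w m t i = ∑ j ∈ univ.erase t, (m j - i j) := by
    rw [Finset.sum_tsub_distrib _ hle]
    unfold CBaux.w
    have := Finset.sum_le_sum hle
    omega
  rw [hexp]
  unfold CBaux.c
  push_cast
  ring
end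

section
/- For all integers r ≥ 0 and m > r, and all real x, Σ_{j=0}^{m-r-1} C(j+r, r) x^j = Σ_{i=0}^{m-r-1} C(m, i) x^i (1-x)^(m-r-i-1). -/
lemma ks_aux (r : ℕ) (x : ℝ) : ∀ n : ℕ,
    ∑ j ∈ Finset.range n, (Nat.choose (j + r) r : ℝ) * x ^ j
      = ∑ i ∈ Finset.range n, (Nat.choose (n + r) i : ℝ) * x ^ i * (1 - x) ^ (n - 1 - i) := by
  intro n
  induction n with
  | zero => simp
  | succ n ih =>
    rw [Finset.sum_range_succ, ih]
    rw [Finset.sum_range_succ' (fun i => ((Nat.choose (n + 1 + r) i : ℝ)) * x ^ i * (1 - x) ^ (n + 1 - 1 - i)) n]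
    have hpascal : ∀ i, (Nat.choose (n + 1 + r) (i + 1) : ℝ)
        = (Nat.choose (n + r) i : ℝ) + (Nat.choose (n + r) (i + 1) : ℝ) := by
      intro i
      have : n + 1 + r = (n + r) + 1 := by ring
      rw [this, Nat.choose_succ_succ']
      push_cast; ring
    have hsplit : ∑ i ∈ Finset.range n,
          (Nat.choose (n + 1 + r) (i + 1) : ℝ) * x ^ (i + 1) * (1 - x) ^ (n + 1 - 1 - (i + 1))
        = (∑ i ∈ Finset.range n, (Nat.choose (n + r) i : ℝ) * x ^ (i + 1) * (1 - x) ^ (n - 1 - i))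
          + ∑ i ∈ Finset.range n, (Nat.choose (n + r) (i + 1) : ℝ) * x ^ (i + 1) * (1 - x) ^ (n - (i + 1)) := by
      rw [← Finset.sum_add_distrib]
      apply Finset.sum_congr rfl
      intro i hi
      have h1 : n + 1 - 1 - (i + 1) = n - 1 - i := by omega
      have h2 : n - (i + 1) = n - 1 - i := by omega
      rw [h1, h2, hpascal]
      ring
    rw [hsplit]
    have hshift : (∑ i ∈ Finset.range n, (Nat.choose (n + r) (i + 1) : ℝ) * x ^ (i + 1) * (1 - x) ^ (n - (i + 1)))
          + (Nat.choose (n + 1 + r) 0 : ℝ) * x ^ 0 * (1 - x) ^ (n + 1 - 1 - 0)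
        = ∑ i ∈ Finset.range (n + 1), (Nat.choose (n + r) i : ℝ) * x ^ i * (1 - x) ^ (n - i) := by
      rw [Finset.sum_range_succ' (fun i => (Nat.choose (n + r) i : ℝ) * x ^ i * (1 - x) ^ (n - i)) n]
      simp
    rw [add_assoc, hshift, Finset.sum_range_succ]
    have hpeel : ∀ i ∈ Finset.range n,
        (Nat.choose (n + r) i : ℝ) * x ^ i * (1 - x) ^ (n - i)
        = ((Nat.choose (n + r) i : ℝ) * x ^ i * (1 - x) ^ (n - 1 - i)) * (1 - x) := by
      intro i hi
      simp only [Finset.mem_range] at hi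
      have : n - i = (n - 1 - i) + 1 := by omega
      rw [this]; ring
    rw [Finset.sum_congr rfl hpeel, ← Finset.sum_mul]
    have hx : ∑ i ∈ Finset.range n, (Nat.choose (n + r) i : ℝ) * x ^ (i + 1) * (1 - x) ^ (n - 1 - i)
        = (∑ i ∈ Finset.range n, (Nat.choose (n + r) i : ℝ) * x ^ i * (1 - x) ^ (n - 1 - i)) * x := by
      rw [Finset.sum_mul]
      apply Finset.sum_congr rfl
      intro i _
      ring
    rw [hx]
    have hsym : (Nat.choose (n + r) n : ℝ) = (Nat.choose (n + r) r : ℝ) := by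
      norm_cast
      rw [Nat.add_comm]
      exact Nat.choose_symm_add.symm
    rw [Nat.sub_self, hsym]
    ring

theorem ks_eq_2_7 (r m : ℕ) (hm : r < m) (x : ℝ) :
    ∑ j ∈ Finset.range (m - r), (Nat.choose (j + r) r : ℝ) * x ^ j
      = ∑ i ∈ Finset.range (m - r), (Nat.choose m i : ℝ) * x ^ i * (1 - x) ^ (m - r - i - 1) := by
  have h := ks_aux r x (m - r)
  have hmr : m - r + r = m := by omega
  rw [hmr] at h
  rw [h]
  apply Finset.sum_congr rfl
  intro i hi
  have he : m - r - 1 - i = m - r - i - 1 := by omega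
  rw [he]
end

section
/- Let m, r, k, ℓ be positive integers with m - r + k - ℓ = 0 and m > r (equivalently ℓ > k). Then for all real x, (1-x)^(r+1) Σ_{i=0}^{k} C(m+i, r) x^(i+m-r) + x^(ℓ+1) Σ_{i=0}^{m} C(k+i, ℓ) (1-x)^(i+k-ℓ) = 1 - Σ_{i=0}^{m-r-1} C(m, i) x^i (1-x)^(m-i). -/
open Finset

private lemma geomSum (y : ℝ) (n : ℕ) :
    (1 - y) * ∑ j ∈ range (n + 1), y ^ j = 1 - y ^ (n + 1) := by
  induction n with
  | zero => simp
  | succ n ih =>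
    rw [sum_range_succ, mul_add]
    linear_combination ih

private lemma keyA (n m : ℕ) (y : ℝ) :
    y * ∑ j ∈ range (m + 1), ((n + 1 + j).choose (n + 1) : ℝ) * y ^ j
      + ∑ j ∈ range (m + 1 + 1), ((n + j).choose n : ℝ) * y ^ j
    = ∑ j ∈ range (m + 1 + 1), ((n + 1 + j).choose (n + 1) : ℝ) * y ^ j := by
  induction m with
  | zero =>
    have h1 : (n + 1 + 1).choose (n + 1) = (n + 1).choose n + 1 := by
      rw [show n + 1 + 1 = (n+1) + 1 from rfl]
      rw [Nat.choose_succ_succ]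
      simp
    simp [sum_range_succ, h1]
    ring
  | succ m ih =>
    rw [sum_range_succ (f := fun j => ((n + 1 + j).choose (n + 1) : ℝ) * y ^ j) (n := m + 1),
        sum_range_succ (f := fun j => ((n + j).choose n : ℝ) * y ^ j) (n := m + 1 + 1),
        sum_range_succ (f := fun j => ((n + 1 + j).choose (n + 1) : ℝ) * y ^ j) (n := m + 1 + 1)]
    have hp : ((n + 1 + (m + 1 + 1)).choose (n + 1) : ℝ)
        = ((n + 1 + (m + 1)).choose (n + 1) : ℝ) + ((n + (m + 1 + 1)).choose n : ℝ) := by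
      have h : (n + 1 + (m + 1 + 1)).choose (n + 1)
          = (n + 1 + (m + 1)).choose (n + 1) + (n + (m + 1 + 1)).choose n := by
        rw [show n + 1 + (m + 1 + 1) = (n + (m + 1 + 1)) + 1 from by omega,
            show n + 1 + (m + 1) = n + (m + 1 + 1) from by omega, Nat.choose_succ_succ]
        exact Nat.add_comm _ _
      exact_mod_cast h
    linear_combination ih - y ^ (m + 1 + 1) * hp

private lemma CB (n m : ℕ) (x : ℝ) :
    (1 - x) ^ (n + 1) * ∑ j ∈ range (m + 1), ((n + j).choose n : ℝ) * x ^ j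
      + x ^ (m + 1) * ∑ j ∈ range (n + 1), ((m + j).choose m : ℝ) * (1 - x) ^ j = 1 := by
  induction m generalizing n with
  | zero =>
    simp only [sum_range_one, Nat.add_zero, Nat.choose_self, Nat.cast_one, pow_zero, mul_one,
      Nat.zero_add, Nat.choose_zero_right, one_mul]
    linear_combination geomSum (1 - x) n
  | succ m ihm =>
    induction n with
    | zero =>
      simp only [sum_range_one, Nat.add_zero, Nat.choose_self, Nat.cast_one, pow_zero, mul_one,
        Nat.zero_add, Nat.choose_zero_right, one_mul]
      linear_combination geomSum x (m + 1)
    | succ n ihn =>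
      have h1 := ihm (n + 1)
      have h2 := ihn
      have k1 := keyA n m x
      have k2 := keyA m n (1 - x)
      linear_combination x * h1 + (1 - x) * h2 - (1 - x) ^ (n + 1 + 1) * k1
        - x ^ (m + 1 + 1) * k2

private lemma Brec (M : ℕ) (x : ℝ) : ∀ d, d ≤ M →
    ∑ i ∈ range (d + 1), ((M + 1).choose i : ℝ) * x ^ i * (1 - x) ^ (M + 1 - i)
    = ∑ i ∈ range (d + 1), (M.choose i : ℝ) * x ^ i * (1 - x) ^ (M - i)
      - (M.choose d : ℝ) * x ^ (d + 1) * (1 - x) ^ (M - d) := by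
  intro d
  induction d with
  | zero =>
    intro _
    rw [sum_range_one, sum_range_one]
    simp only [Nat.choose_zero_right, Nat.cast_one, pow_zero, one_mul, mul_one, Nat.sub_zero]
    ring
  | succ d ih =>
    intro hd
    have ih' := ih (by omega)
    have e1 : M + 1 - (d + 1) = M - d := by omega
    have e2 : M - d = (M - (d + 1)) + 1 := by omega
    rw [sum_range_succ (f := fun i => (((M + 1).choose i : ℝ) * x ^ i * (1 - x) ^ (M + 1 - i))) (n := d + 1),
        sum_range_succ (f := fun i => ((M.choose i : ℝ) * x ^ i * (1 - x) ^ (M - i))) (n := d + 1), e1, e2]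
    rw [e2] at ih'
    have hp : ((M + 1).choose (d + 1) : ℝ) = (M.choose d : ℝ) + (M.choose (d + 1) : ℝ) := by
      exact_mod_cast congrArg (Nat.cast (R := ℝ)) (Nat.choose_succ_succ M d)
    linear_combination ih' + x ^ (d + 1) * (1 - x) ^ (M - (d + 1) + 1) * hp

private lemma teleS (r d : ℕ) (x : ℝ) :
    (1 - x) * ∑ j ∈ range (d + 1), ((r + 1 + j).choose (r + 1) : ℝ) * x ^ j
      + ((r + 1 + d).choose (r + 1) : ℝ) * x ^ (d + 1)
    = ∑ j ∈ range (d + 1), ((r + j).choose r : ℝ) * x ^ j := by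
  induction d with
  | zero => simp
  | succ d ih =>
    rw [sum_range_succ, sum_range_succ (f := fun j => ((r + j).choose r : ℝ) * x ^ j)]
    have hp : ((r + 1 + (d + 1)).choose (r + 1) : ℝ)
        = ((r + 1 + d).choose (r + 1) : ℝ) + ((r + (d + 1)).choose r : ℝ) := by
      have h : (r + 1 + (d + 1)).choose (r + 1)
          = (r + (d + 1)).choose r + (r + (d + 1)).choose (r + 1) := by
        rw [show r + 1 + (d + 1) = (r + (d + 1)) + 1 from by omega]
        exact Nat.choose_succ_succ _ _
      have h2 : r + (d + 1) = r + 1 + d := by omega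
      push_cast [h, h2]
      ring
    linear_combination ih + x ^ (d + 1) * hp

private lemma lemB (r d : ℕ) (x : ℝ) :
    ∑ i ∈ range (d + 1), ((r + d + 1).choose i : ℝ) * x ^ i * (1 - x) ^ (r + d + 1 - i)
    = (1 - x) ^ (r + 1) * ∑ j ∈ range (d + 1), ((r + j).choose r : ℝ) * x ^ j := by
  induction r with
  | zero =>
    simp only [Nat.zero_add, Nat.choose_zero_right, Nat.cast_one, one_mul]
    have h : (1 : ℝ) = ∑ i ∈ range (d + 1 + 1), x ^ i * (1 - x) ^ (d + 1 - i) * ((d + 1).choose i : ℝ) := by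
      have := add_pow x (1 - x) (d + 1)
      rw [show x + (1 - x) = (1 : ℝ) from by ring, one_pow] at this
      exact this
    rw [sum_range_succ] at h
    simp only [Nat.sub_self, pow_zero, mul_one, Nat.choose_self, Nat.cast_one] at h
    have hconv : ∑ i ∈ range (d + 1), ((d + 1).choose i : ℝ) * x ^ i * (1 - x) ^ (d + 1 - i)
        = ∑ i ∈ range (d + 1), x ^ i * (1 - x) ^ (d + 1 - i) * ((d + 1).choose i : ℝ) :=
      sum_congr rfl (fun i _ => by ring)
    linear_combination hconv - h - geomSum x d
  | succ r ih =>
    have hb := Brec (r + d + 1) x d (by omega)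
    have e1 : r + 1 + d + 1 = r + d + 1 + 1 := by omega
    have e2 : r + d + 1 - d = r + 1 := by omega
    rw [e2] at hb
    simp only [e1]
    rw [hb, ih]
    have hsym : ((r + d + 1).choose d : ℝ) = ((r + 1 + d).choose (r + 1) : ℝ) := by
      have : (r + 1 + d).choose ((r + 1 + d) - (r + 1)) = (r + 1 + d).choose (r + 1) :=
        Nat.choose_symm (by omega)
      rw [show (r + 1 + d) - (r + 1) = d from by omega] at this
      rw [show r + d + 1 = r + 1 + d from by omega]
      exact_mod_cast this
    linear_combination (-(1 - x) ^ (r + 1)) * teleS r d x - x ^ (d + 1) * (1 - x) ^ (r + 1) * hsym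

theorem three_param_case_m_gt_r (m r k ℓ : ℕ) (hm : 0 < m) (hr : 0 < r) (hk : 0 < k)
    (hℓ : 0 < ℓ) (hsum : m + k = r + ℓ) (hmr : r < m) (x : ℝ) :
    (1 - x) ^ (r + 1) * ∑ i ∈ Finset.range (k + 1), (Nat.choose (m + i) r : ℝ) * x ^ (i + m - r)
    + x ^ (ℓ + 1) * ∑ i ∈ Finset.range (m + 1), (Nat.choose (k + i) ℓ : ℝ) * (1 - x) ^ (i + k - ℓ)
    = 1 - ∑ i ∈ Finset.range (m - r), (Nat.choose m i : ℝ) * x ^ i * (1 - x) ^ (m - i) := by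
  obtain ⟨d, rfl⟩ : ∃ d, m = r + d + 1 := ⟨m - r - 1, by omega⟩
  obtain rfl : ℓ = k + d + 1 := by omega
  rw [show r + d + 1 - r = d + 1 from by omega]
  -- reindex the first sum
  have e1 : ∑ i ∈ range (k + 1), ((r + d + 1 + i).choose r : ℝ) * x ^ (i + (r + d + 1) - r)
      = ∑ i ∈ range (k + 1), ((r + (d + 1 + i)).choose r : ℝ) * x ^ (d + 1 + i) := by
    refine sum_congr rfl fun i _ => ?_
    rw [show i + (r + d + 1) - r = d + 1 + i from by omega,
        show r + d + 1 + i = r + (d + 1 + i) from by omega]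
  have hs1 : ∑ j ∈ range (k + d + 1 + 1), ((r + j).choose r : ℝ) * x ^ j
      = (∑ j ∈ range (d + 1), ((r + j).choose r : ℝ) * x ^ j)
        + ∑ i ∈ range (k + 1), ((r + (d + 1 + i)).choose r : ℝ) * x ^ (d + 1 + i) := by
    rw [show k + d + 1 + 1 = (d + 1) + (k + 1) from by omega,
        Finset.sum_range_add (fun j => ((r + j).choose r : ℝ) * x ^ j) (d + 1) (k + 1)]
  -- reindex the second sum
  have hs2 : ∑ i ∈ range (r + d + 1 + 1), ((k + i).choose (k + d + 1) : ℝ) * (1 - x) ^ (i + k - (k + d + 1))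
      = ∑ j ∈ range (r + 1), ((k + d + 1 + j).choose (k + d + 1) : ℝ) * (1 - x) ^ j := by
    rw [show r + d + 1 + 1 = (d + 1) + (r + 1) from by omega,
        Finset.sum_range_add (fun i => ((k + i).choose (k + d + 1) : ℝ) * (1 - x) ^ (i + k - (k + d + 1))) (d + 1) (r + 1)]
    have hz : ∑ i ∈ range (d + 1), ((k + i).choose (k + d + 1) : ℝ) * (1 - x) ^ (i + k - (k + d + 1)) = 0 := by
      refine sum_eq_zero fun i hi => ?_
      rw [mem_range] at hi
      rw [Nat.choose_eq_zero_of_lt (by omega)]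
      simp
    rw [hz, zero_add]
    refine sum_congr rfl fun j _ => ?_
    rw [show k + (d + 1 + j) = k + d + 1 + j from by omega,
        show d + 1 + j + k - (k + d + 1) = j from by omega]
  rw [e1, hs2]
  have hcb := CB r (k + d + 1) x
  have hb := lemB r d x
  linear_combination hcb - (1 - x) ^ (r + 1) * hs1 + hb
end

section
/- For positive integers r and ℓ and all real x, (1-x)^(r+1) Σ_{i=0}^{ℓ} C(r+i, r) x^i + x^(ℓ+1) Σ_{i=0}^{r} C(ℓ+i, ℓ) (1-x)^i = 1. -/
private lemma cb_aux (ℓ : ℕ) (x : ℝ) : ∀ r : ℕ,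
    (∑ i ∈ Finset.range (r + 1), (Nat.choose (ℓ + i) ℓ : ℝ) * (1 - x) ^ i)
    - x * ∑ i ∈ Finset.range (r + 1), (Nat.choose (ℓ + 1 + i) (ℓ + 1) : ℝ) * (1 - x) ^ i
    = (1 - x) ^ (r + 1) * (Nat.choose (ℓ + 1 + r) (ℓ + 1) : ℝ) := by
  intro r
  induction r with
  | zero => simp
  | succ n ih =>
    rw [Finset.sum_range_succ, Finset.sum_range_succ (f := fun i =>
      (Nat.choose (ℓ + 1 + i) (ℓ + 1) : ℝ) * (1 - x) ^ i)]
    have pascal : (Nat.choose (ℓ + 1 + (n + 1)) (ℓ + 1) : ℝ)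
        = (Nat.choose (ℓ + 1 + n) (ℓ + 1) : ℝ) + (Nat.choose (ℓ + (n + 1)) ℓ : ℝ) := by
      have : ℓ + 1 + (n + 1) = (ℓ + 1 + n) + 1 := by ring
      rw [this]
      have := Nat.succ_sub_one (ℓ + 1 + n)
      rw [Nat.choose_succ_succ' (ℓ + 1 + n)]
      push_cast
      have : ℓ + 1 + n = ℓ + (n + 1) := by ring
      rw [this]
      ring
    rw [pascal]
    linear_combination ih

private lemma cb_main (r ℓ : ℕ) (x : ℝ) :
    (1 - x) ^ (r + 1) * ∑ i ∈ Finset.range (ℓ + 1), (Nat.choose (r + i) r : ℝ) * x ^ i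
    + x ^ (ℓ + 1) * ∑ i ∈ Finset.range (r + 1), (Nat.choose (ℓ + i) ℓ : ℝ) * (1 - x) ^ i
    = 1 := by
  induction ℓ with
  | zero =>
    simp only [Finset.range_one, Finset.sum_singleton, Nat.add_zero, Nat.choose_self,
      Nat.zero_add, Nat.choose_zero_right, Nat.cast_one, pow_zero, mul_one, one_mul, pow_one]
    have g := geom_sum_mul (1 - x) (r + 1)
    linear_combination -g
  | succ ℓ ih =>
    rw [Finset.sum_range_succ (f := fun i => (Nat.choose (r + i) r : ℝ) * x ^ i)]
    have hsym : (Nat.choose (r + (ℓ + 1)) r : ℝ) = (Nat.choose (ℓ + 1 + r) (ℓ + 1) : ℝ) := by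
      rw [Nat.add_comm r (ℓ + 1), Nat.choose_symm_add]
    rw [hsym]
    have aux := cb_aux ℓ x r
    linear_combination ih - x ^ (ℓ + 1) * aux

theorem three_param_case_eq (r ℓ : ℕ) (hr : 0 < r) (hℓ : 0 < ℓ) (x : ℝ) :
    (1 - x) ^ (r + 1) * ∑ i ∈ Finset.range (ℓ + 1), (Nat.choose (r + i) r : ℝ) * x ^ i
    + x ^ (ℓ + 1) * ∑ i ∈ Finset.range (r + 1), (Nat.choose (ℓ + i) ℓ : ℝ) * (1 - x) ^ i
    = 1 := cb_main r ℓ x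
end

section
/- For all integers m₁, m₂ ≥ 0 and all real x₁, x₂ with x₁ + x₂ ≠ 0 (and the right-hand side well-defined), x₁^(m₁+1) x₂^(m₂+1) = Σ_{i₂=0}^{m₂} C(m₁+i₂, m₁) x₂^(m₂-i₂+1) (x₁x₂/(x₁+x₂))^(m₁+i₂+1) + Σ_{i₁=0}^{m₁} C(m₂+i₁, m₂) x₁^(m₁-i₁+1) (x₁x₂/(x₁+x₂))^(i₁+m₂+1). -/
lemma cb_tele (m n : ℕ) (v : ℝ) :
    ∑ i ∈ Finset.range (m + 1),
      ((Nat.choose (n + i) n : ℝ) * v ^ i - (1 - v) * ((Nat.choose (n + 1 + i) (n + 1) : ℝ) * v ^ i))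
      = (Nat.choose (m + n + 1) m : ℝ) * v ^ (m + 1) := by
  have key := Finset.sum_range_sub (fun i => ((Nat.choose (n + i) (n + 1) : ℝ)) * v ^ i) (m + 1)
  have hterm : ∀ i ∈ Finset.range (m + 1),
      ((Nat.choose (n + i) n : ℝ) * v ^ i - (1 - v) * ((Nat.choose (n + 1 + i) (n + 1) : ℝ) * v ^ i))
      = ((Nat.choose (n + (i + 1)) (n + 1) : ℝ)) * v ^ (i + 1)
        - ((Nat.choose (n + i) (n + 1) : ℝ)) * v ^ i := by
    intro i _
    have hp : Nat.choose (n + 1 + i) (n + 1) = Nat.choose (n + i) n + Nat.choose (n + i) (n + 1) := by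
      rw [show n + 1 + i = (n + i) + 1 by ring]
      exact Nat.choose_succ_succ _ _
    have hidx : n + (i + 1) = n + 1 + i := by ring
    rw [hidx, hp]
    push_cast
    ring
  rw [Finset.sum_congr rfl hterm, key]
  have h0 : Nat.choose n (n + 1) = 0 := Nat.choose_eq_zero_of_lt (by omega)
  have h1 : Nat.choose (n + (m + 1)) (n + 1) = Nat.choose (m + n + 1) m := by
    rw [show n + (m + 1) = m + n + 1 by ring]
    rw [← Nat.choose_symm (show m ≤ m + n + 1 by omega)]
    congr 1
    omega
  simp [h0, h1]

lemma cb (m n : ℕ) (u v : ℝ) (h : u + v = 1) :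
    v ^ (m + 1) * ∑ i ∈ Finset.range (n + 1), (Nat.choose (m + i) m : ℝ) * u ^ i
    + u ^ (n + 1) * ∑ i ∈ Finset.range (m + 1), (Nat.choose (n + i) n : ℝ) * v ^ i = 1 := by
  induction n with
  | zero =>
      have hg := geom_sum_mul v (m + 1)
      simp only [Finset.sum_range_one, Nat.choose_self, Nat.cast_one, pow_zero, mul_one,
        one_mul, pow_one, Nat.add_zero, Nat.choose_zero_right, zero_add]
      rw [show u = 1 - v by linarith]
      linear_combination -hg
  | succ n ih =>
      have hu : 1 - v = u := by linarith
      have htele := cb_tele m n v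
      rw [Finset.sum_range_succ]
      have hT : ∑ i ∈ Finset.range (m + 1), (Nat.choose (n + i) n : ℝ) * v ^ i
          - u * ∑ i ∈ Finset.range (m + 1), (Nat.choose (n + 1 + i) (n + 1) : ℝ) * v ^ i
          = (Nat.choose (m + n + 1) m : ℝ) * v ^ (m + 1) := by
        rw [Finset.mul_sum, ← Finset.sum_sub_distrib, ← htele, ← hu]
      have hidx : m + (n + 1) = m + n + 1 := by ring
      rw [hidx]
      linear_combination ih - u ^ (n + 1) * hT

theorem n2_homogeneous (m₁ m₂ : ℕ) (x₁ x₂ : ℝ) (hx : x₁ + x₂ ≠ 0) :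
    x₁ ^ (m₁ + 1) * x₂ ^ (m₂ + 1)
      = ∑ i₂ ∈ Finset.range (m₂ + 1),
          (Nat.choose (m₁ + i₂) m₁ : ℝ) * x₂ ^ (m₂ - i₂ + 1) *
            (x₁ * x₂ / (x₁ + x₂)) ^ (m₁ + i₂ + 1)
      + ∑ i₁ ∈ Finset.range (m₁ + 1),
          (Nat.choose (m₂ + i₁) m₂ : ℝ) * x₁ ^ (m₁ - i₁ + 1) *
            (x₁ * x₂ / (x₁ + x₂)) ^ (i₁ + m₂ + 1) := by
  by_cases h1 : x₁ = 0
  · subst h1; simp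
  by_cases h2 : x₂ = 0
  · subst h2; simp
  have hcb := cb m₁ m₂ (x₁ / (x₁ + x₂)) (x₂ / (x₁ + x₂)) (by field_simp)
  have hmain : x₁ ^ (m₁ + 1) * x₂ ^ (m₂ + 1)
      = x₁ ^ (m₁ + 1) * x₂ ^ (m₂ + 1) *
        ((x₂ / (x₁ + x₂)) ^ (m₁ + 1)
            * ∑ i ∈ Finset.range (m₂ + 1), (Nat.choose (m₁ + i) m₁ : ℝ) * (x₁ / (x₁ + x₂)) ^ i
          + (x₁ / (x₁ + x₂)) ^ (m₂ + 1)
            * ∑ i ∈ Finset.range (m₁ + 1), (Nat.choose (m₂ + i) m₂ : ℝ) * (x₂ / (x₁ + x₂)) ^ i) := by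
    rw [hcb, mul_one]
  rw [hmain, mul_add]
  congr 1
  · rw [Finset.mul_sum, Finset.mul_sum]
    apply Finset.sum_congr rfl
    intro i hi
    have hi' : i ≤ m₂ := Nat.lt_succ_iff.mp (Finset.mem_range.mp hi)
    obtain ⟨k, hk⟩ : ∃ k, m₂ = k + i := ⟨m₂ - i, by omega⟩
    subst hk
    have hsub : k + i - i = k := by omega
    rw [hsub]
    rw [div_pow, div_pow, div_pow, mul_pow]
    field_simp
    ring
  · rw [Finset.mul_sum, Finset.mul_sum]
    apply Finset.sum_congr rfl
    intro i hi
    have hi' : i ≤ m₁ := Nat.lt_succ_iff.mp (Finset.mem_range.mp hi)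
    obtain ⟨k, hk⟩ : ∃ k, m₁ = k + i := ⟨m₁ - i, by omega⟩
    subst hk
    have hsub : k + i - i = k := by omega
    rw [hsub]
    rw [div_pow, div_pow, div_pow, mul_pow]
    field_simp
    ring
end

section
/- For all integers k ≥ 0 and all real x, 1 = x^(k+1) Σ_{i=0}^{k} C(k+i, k) (1-x)^i + (1-x)^(k+1) Σ_{i=0}^{k} C(k+i, k) x^i. -/
lemma daubechies_key (k : ℕ) (y : ℝ) :
    ∑ i ∈ Finset.range (k + 2), ((k + 1 + i).choose (k + 1) : ℝ) * y ^ i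
    = ∑ i ∈ Finset.range (k + 2), ((k + i).choose k : ℝ) * y ^ i
      + y * ∑ i ∈ Finset.range (k + 1), ((k + 1 + i).choose (k + 1) : ℝ) * y ^ i := by
  rw [Finset.sum_range_succ' (fun i => ((k + 1 + i).choose (k + 1) : ℝ) * y ^ i) (k + 1),
      Finset.sum_range_succ' (fun i => ((k + i).choose k : ℝ) * y ^ i) (k + 1),
      Finset.mul_sum]
  have h : ∀ i ∈ Finset.range (k + 1),
      ((k + 1 + (i + 1)).choose (k + 1) : ℝ) * y ^ (i + 1)
      = ((k + (i + 1)).choose k : ℝ) * y ^ (i + 1)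
        + y * (((k + 1 + i).choose (k + 1) : ℝ) * y ^ i) := by
    intro i _
    have h1 : k + 1 + (i + 1) = (k + 1 + i) + 1 := by ring
    have h2 : k + (i + 1) = k + 1 + i := by ring
    rw [h1, h2, Nat.choose_succ_succ]
    push_cast
    ring
  rw [Finset.sum_congr rfl h, Finset.sum_add_distrib]
  simp
  ring

theorem daubechies_identity (k : ℕ) (x : ℝ) :
    1 = x ^ (k + 1) * ∑ i ∈ Finset.range (k + 1), (Nat.choose (k + i) k : ℝ) * (1 - x) ^ i
      + (1 - x) ^ (k + 1) * ∑ i ∈ Finset.range (k + 1), (Nat.choose (k + i) k : ℝ) * x ^ i := by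
  induction k with
  | zero => simp
  | succ k ih =>
    have hk1 := daubechies_key k (1 - x)
    have hk2 := daubechies_key k x
    have ha1 := Finset.sum_range_succ (fun i => ((k + i).choose k : ℝ) * (1 - x) ^ i) (k + 1)
    have ha2 := Finset.sum_range_succ (fun i => ((k + i).choose k : ℝ) * x ^ i) (k + 1)
    have ht1 := Finset.sum_range_succ (fun i => ((k + 1 + i).choose (k + 1) : ℝ) * (1 - x) ^ i) (k + 1)
    have ht2 := Finset.sum_range_succ (fun i => ((k + 1 + i).choose (k + 1) : ℝ) * x ^ i) (k + 1)
    have hb : ((k + 1 + (k + 1)).choose (k + 1) : ℝ) = 2 * ((k + (k + 1)).choose k : ℝ) := by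
      have h1 : k + 1 + (k + 1) = (k + (k + 1)) + 1 := by ring
      rw [h1, Nat.choose_succ_succ]
      have h2 : (k + (k + 1)).choose (k + 1) = (k + (k + 1)).choose k := by
        rw [← Nat.choose_symm (by omega : k ≤ k + (k + 1))]
        congr 1
        omega
      rw [h2]
      push_cast
      ring
    have e1 : x ^ (k + 2) * ∑ i ∈ Finset.range (k + 2), ((k + 1 + i).choose (k + 1) : ℝ) * (1 - x) ^ i
        = x ^ (k + 1) * ∑ i ∈ Finset.range (k + 1), ((k + i).choose k : ℝ) * (1 - x) ^ i
          + ((k + (k + 1)).choose k : ℝ) * x ^ (k + 1) * (1 - x) ^ (k + 1)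
          - ((k + 1 + (k + 1)).choose (k + 1) : ℝ) * x ^ (k + 1) * (1 - x) ^ (k + 2) := by
      linear_combination (x ^ (k + 1)) * hk1 + (x ^ (k + 1)) * ha1 - ((1 - x) * x ^ (k + 1)) * ht1
    have e2 : (1 - x) ^ (k + 2) * ∑ i ∈ Finset.range (k + 2), ((k + 1 + i).choose (k + 1) : ℝ) * x ^ i
        = (1 - x) ^ (k + 1) * ∑ i ∈ Finset.range (k + 1), ((k + i).choose k : ℝ) * x ^ i
          + ((k + (k + 1)).choose k : ℝ) * (1 - x) ^ (k + 1) * x ^ (k + 1)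
          - ((k + 1 + (k + 1)).choose (k + 1) : ℝ) * (1 - x) ^ (k + 1) * x ^ (k + 2) := by
      linear_combination ((1 - x) ^ (k + 1)) * hk2 + ((1 - x) ^ (k + 1)) * ha2 - (x * (1 - x) ^ (k + 1)) * ht2
    calc (1 : ℝ) = x ^ (k + 1) * ∑ i ∈ Finset.range (k + 1), ((k + i).choose k : ℝ) * (1 - x) ^ i
        + (1 - x) ^ (k + 1) * ∑ i ∈ Finset.range (k + 1), ((k + i).choose k : ℝ) * x ^ i := ih
      _ = x ^ (k + 1 + 1) * ∑ i ∈ Finset.range (k + 1 + 1), ((k + 1 + i).choose (k + 1) : ℝ) * (1 - x) ^ i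
        + (1 - x) ^ (k + 1 + 1) * ∑ i ∈ Finset.range (k + 1 + 1), ((k + 1 + i).choose (k + 1) : ℝ) * x ^ i := by
          linear_combination -e1 - e2 + (x ^ (k + 1) * (1 - x) ^ (k + 1)) * hb
end

section
/- For all positive integers n, nonnegative integers m₁, ..., mₙ, and nonzero real x₁, ..., xₙ with x₁ + ⋯ + xₙ ≠ 0: 1/(x₁^(m₁+1) ⋯ xₙ^(mₙ+1)) = Σ_{t=1}^{n} Σ_{0 ≤ i_j ≤ m_j, j ≠ t} [((Σ_{j≠t} i_j) + m_t)! / (m_t! ∏_{j≠t} i_j!)] · 1/( (∏_{j≠t} x_j^(m_j - i_j + 1)) · (x₁ + ⋯ + xₙ)^((Σ_{j≠t} i_j) + m_t + 1) ). -/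
/-!
Put `p j = x j / (x₁ + ⋯ + xₙ)`, so that `∑ p j = 1`. After multiplying by `∏ x j ^ (m j + 1)`,
the term `(t, i)` of the right-hand side becomes `multinomial(c) p^c p_t` with `c = i + m_t e_t`:
the weight of the lattice paths from `0` that stay in the box `c ≤ m` and leave it through a step
in direction `t`. So the identity says that the paths leave the box with total weight `1`. This
is a conservation law: by Pascal's rule for multinomial coefficients the weight
`multinomial(c) p^c` of each nonzero point of the box is what flows into it from its neighbours
`c - e_t`, and since `∑ p_t = 1` every point passes on its whole weight; hence the outflow across
the boundary equals the weight `1` of the starting point.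
-/

open Finset Function
open scoped Nat

section
variable {ι : Type*} [Fintype ι]

section
variable {R : Type*} [CommSemiring R]

def multinomialTerm (p : ι → R) (c : ι → ℕ) : R :=
  Nat.multinomial univ c * ∏ j, p j ^ c j

theorem multinomialTerm_zero (p : ι → R) : multinomialTerm p 0 = 1 := by
  simp [multinomialTerm, Nat.multinomial]

end

variable [DecidableEq ι]

@[to_additive]
theorem Finset.prod_apply_update {α M : Type*} [CommMonoid M] (g : ι → α → M) (c : ι → α)
    (t : ι) (a : α) :
    ∏ j, g j (update c t a j) = g t a * ∏ j ∈ univ.erase t, g j (c j) := by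
  simp_rw [apply_update g]
  rw [prod_update_of_mem (mem_univ t), sdiff_singleton_eq_erase]

theorem Nat.succ_mul_multinomial_update (c : ι → ℕ) (t : ι) :
    (c t + 1) * Nat.multinomial univ (update c t (c t + 1))
      = (∑ j, c j + 1) * Nat.multinomial univ c := by
  have hspec := Nat.multinomial_spec univ (update c t (c t + 1))
  have hfact := prod_apply_update (fun _ k => Nat.factorial k) c t (c t + 1)
  have hsum := sum_apply_update (fun _ k => k) c t (c t + 1)
  rw [hfact, hsum, add_assoc, add_comm 1, ← add_assoc, add_sum_erase _ _ (mem_univ t),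
    Nat.factorial_succ, Nat.factorial_succ, ← Nat.multinomial_spec univ c,
    ← mul_prod_erase univ _ (mem_univ t)] at hspec
  refine Nat.eq_of_mul_eq_mul_left
    (Nat.mul_pos (factorial_pos (c t)) (prod_factorial_pos (univ.erase t) c)) ?_
  convert hspec using 1 <;> ring

theorem Nat.multinomial_eq_sum_multinomial_update_pred (c : ι → ℕ) (hc : c ≠ 0) :
    Nat.multinomial univ c = ∑ t with c t ≠ 0, Nat.multinomial univ (update c t (c t - 1)) := by
  have hN : ∑ j, c j ≠ 0 := fun h => hc (funext fun j => sum_eq_zero_iff.1 h j (mem_univ j))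
  have hstep : ∀ t, c t ≠ 0 → c t * Nat.multinomial univ c
      = (∑ j, c j) * Nat.multinomial univ (update c t (c t - 1)) := by
    intro t ht
    have h := Nat.succ_mul_multinomial_update (update c t (c t - 1)) t
    have hsum := sum_apply_update (fun _ k => k) c t (c t - 1)
    rw [update_self, update_idem, Nat.sub_add_cancel (Nat.one_le_iff_ne_zero.2 ht),
      update_eq_self, hsum] at h
    rw [h, ← add_sum_erase _ _ (mem_univ t)]
    congr 1
    omega
  refine Nat.eq_of_mul_eq_mul_left (Nat.pos_of_ne_zero hN) ?_
  calc (∑ j, c j) * Nat.multinomial univ c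
      = ∑ t with c t ≠ 0, c t * Nat.multinomial univ c := by
        rw [sum_mul, sum_filter_of_ne fun t _ h => left_ne_zero_of_mul h]
    _ = ∑ t with c t ≠ 0, (∑ j, c j) * Nat.multinomial univ (update c t (c t - 1)) :=
        sum_congr rfl fun t ht => hstep t (mem_filter.1 ht).2
    _ = _ := (mul_sum _ _ _).symm

section
variable {R : Type*} [CommSemiring R]

theorem sum_filter_lt_multinomialTerm_mul (p : ι → R) (m : ι → ℕ) (t : ι) :
    ∑ c ∈ Iic m with c t < m t, multinomialTerm p c * p t
      = ∑ c ∈ Iic m with c t ≠ 0,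
          Nat.multinomial univ (update c t (c t - 1)) * ∏ j, p j ^ c j := by
  refine sum_nbij' (fun c => update c t (c t + 1)) (fun c => update c t (c t - 1))
    (fun c hc => ?_) (fun c hc => ?_) (fun c _ => ?_) (fun c hc => ?_) (fun c _ => ?_)
  · simp only [mem_filter, mem_Iic] at hc ⊢
    refine ⟨update_le_iff.2 ⟨hc.2, fun j _ => hc.1 j⟩, by simp⟩
  · simp only [mem_filter, mem_Iic] at hc ⊢
    obtain ⟨hcm, hct⟩ := hc
    refine ⟨update_le_iff.2 ⟨(Nat.sub_le _ _).trans (hcm t), fun j _ => hcm j⟩, ?_⟩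
    have : c t ≤ m t := hcm t
    simp only [update_self]
    omega
  · simp
  · simp only [mem_filter] at hc
    simp [Nat.sub_add_cancel (Nat.one_le_iff_ne_zero.2 hc.2)]
  · have hprod := prod_apply_update (fun j k => p j ^ k) c t (c t + 1)
    simp only [multinomialTerm, update_idem, update_self, Nat.add_sub_cancel, update_eq_self,
      hprod, pow_succ, ← mul_prod_erase univ (fun j => p j ^ c j) (mem_univ t)]
    ring

theorem sum_sum_filter_lt_multinomialTerm_mul (p : ι → R) (m : ι → ℕ) :
    ∑ t, ∑ c ∈ Iic m with c t < m t, multinomialTerm p c * p t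
      = ∑ c ∈ (Iic m).erase 0, multinomialTerm p c := by
  simp_rw [sum_filter_lt_multinomialTerm_mul]
  rw [sum_comm' (t' := Iic m) (s' := fun c => univ.filter fun t => c t ≠ 0)
    (fun t c => by simp [and_comm])]
  rw [← sum_erase (Iic m) (a := 0) (by simp)]
  refine sum_congr rfl fun c hc => ?_
  rw [multinomialTerm, ← sum_mul, ← Nat.cast_sum,
    ← Nat.multinomial_eq_sum_multinomial_update_pred c (ne_of_mem_erase hc)]

end

theorem sum_sum_filter_eq_multinomialTerm_mul_eq_one {R : Type*} [CommRing R] {p : ι → R}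
    (hp : ∑ j, p j = 1) (m : ι → ℕ) :
    ∑ t, ∑ c ∈ Iic m with c t = m t, multinomialTerm p c * p t = 1 := by
  have hsplit : ∀ t, ∑ c ∈ Iic m, multinomialTerm p c * p t
      = ∑ c ∈ Iic m with c t < m t, multinomialTerm p c * p t
        + ∑ c ∈ Iic m with c t = m t, multinomialTerm p c * p t := by
    intro t
    rw [← sum_filter_add_sum_filter_not _ fun c => c t < m t]
    congr 1
    refine sum_congr (filter_congr fun c hc => ?_) fun _ _ => rfl
    have : c t ≤ m t := mem_Iic.1 hc t
    omega
  have hflow : ∑ c ∈ Iic m, multinomialTerm p c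
      = ∑ t, ∑ c ∈ Iic m, multinomialTerm p c * p t := by
    rw [sum_comm]
    simp_rw [← mul_sum, hp, mul_one]
  rw [sum_congr rfl fun t _ => hsplit t, sum_add_distrib, sum_sum_filter_lt_multinomialTerm_mul,
    ← add_sum_erase _ _ (mem_Iic.2 zero_le), multinomialTerm_zero] at hflow
  linear_combination -hflow

theorem sum_filter_apply_eq_eq_sum_piFinset {M : Type*} [AddCommMonoid M] (m : ι → ℕ) (t : ι)
    (f : (ι → ℕ) → M) :
    ∑ c ∈ Iic m with c t = m t, f c
      = ∑ i ∈ Fintype.piFinset (fun j => range (if j = t then 1 else m j + 1)),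
          f (update i t (m t)) := by
  refine sum_nbij' (fun c => update c t 0) (fun i => update i t (m t))
    (fun c hc => ?_) (fun i hi => ?_) (fun c hc => ?_) (fun i hi => ?_) (fun c hc => ?_)
  · simp only [mem_filter, mem_Iic] at hc
    simp only [Fintype.mem_piFinset, mem_range]
    intro j
    by_cases hj : j = t
    · simp [hj]
    · simpa [hj, Nat.lt_succ_iff] using hc.1 j
  · simp only [Fintype.mem_piFinset, mem_range] at hi
    simp only [mem_filter, mem_Iic, update_self, and_true]
    refine update_le_iff.2 ⟨le_rfl, fun j hj => ?_⟩
    simpa [hj, Nat.lt_succ_iff] using hi j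
  · simp only [mem_filter] at hc
    rw [update_idem, ← hc.2, update_eq_self]
  · simp only [Fintype.mem_piFinset, mem_range] at hi
    have : i t = 0 := by simpa using hi t
    rw [update_idem, ← this, update_eq_self]
  · simp only [mem_filter] at hc
    rw [update_idem, ← hc.2, update_eq_self]

theorem multinomialTerm_update_mul_div_prod_pow {K : Type*} [Field K] [CharZero K] {x : ι → K}
    (hx : ∀ j, x j ≠ 0) {S : K} (hS : S ≠ 0) {m i : ι → ℕ} {t : ι}
    (hi : ∀ j ≠ t, i j ≤ m j) :
    multinomialTerm (fun j => x j / S) (update i t (m t)) * (x t / S) / ∏ j, x j ^ (m j + 1)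
      = ((∑ j ∈ univ.erase t, i j + m t)! : K)
          / ((m t)! * (∏ j ∈ univ.erase t, (i j)! : ℕ)) *
          (1 / ((∏ j ∈ univ.erase t, x j ^ (m j - i j + 1))
            * S ^ (∑ j ∈ univ.erase t, i j + m t + 1))) := by
  have hcoef : (Nat.multinomial univ (update i t (m t)) : K)
      = (∑ j ∈ univ.erase t, i j + m t)!
          / ((m t)! * (∏ j ∈ univ.erase t, (i j)! : ℕ)) := by
    have hspec := Nat.multinomial_spec univ (update i t (m t))
    rw [prod_apply_update (fun _ k => k !), sum_apply_update (fun _ k => k), add_comm (m t)]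
      at hspec
    rw [← Nat.cast_mul, eq_div_iff (Nat.cast_ne_zero.2
      (Nat.mul_pos (Nat.factorial_pos _) (Nat.prod_factorial_pos _ _)).ne')]
    exact_mod_cast (mul_comm _ _).trans hspec
  have hpow : (∏ j, (x j / S) ^ update i t (m t) j) * (x t / S)
      = x t ^ (m t + 1) * (∏ j ∈ univ.erase t, x j ^ i j)
          / S ^ (∑ j ∈ univ.erase t, i j + m t + 1) := by
    have hsplit := prod_apply_update (fun j k => (x j / S) ^ k) i t (m t)
    rw [hsplit]
    simp_rw [div_pow, prod_div_distrib, prod_pow_eq_pow_sum]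
    field_simp
    ring
  have hprod : ∏ j, x j ^ (m j + 1)
      = x t ^ (m t + 1) * (∏ j ∈ univ.erase t, x j ^ i j)
          * ∏ j ∈ univ.erase t, x j ^ (m j - i j + 1) := by
    rw [← mul_prod_erase univ _ (mem_univ t), mul_assoc, ← prod_mul_distrib]
    refine congrArg _ (prod_congr rfl fun j hj => ?_)
    have := hi j (ne_of_mem_erase hj)
    rw [← pow_add]
    congr 1
    omega
  have hxi : ∏ j ∈ univ.erase t, x j ^ i j ≠ 0 :=
    prod_ne_zero_iff.2 fun j _ => pow_ne_zero _ (hx j)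
  have hxr : ∏ j ∈ univ.erase t, x j ^ (m j - i j + 1) ≠ 0 :=
    prod_ne_zero_iff.2 fun j _ => pow_ne_zero _ (hx j)
  have hxt := hx t
  rw [multinomialTerm, mul_assoc, hpow, hprod, hcoef]
  field_simp

end

theorem n_var_inverse_identity_general (n : ℕ) (m : Fin n → ℕ) (x : Fin n → ℝ)
    (hx : ∀ t, x t ≠ 0) (hs : (∑ j, x j) ≠ 0) :
    1 / (∏ j, x j ^ (m j + 1))
      = ∑ t, ∑ i ∈ Fintype.piFinset (fun j => Finset.range (if j = t then 1 else m j + 1)),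
          ((Nat.factorial ((∑ j ∈ Finset.univ.erase t, i j) + m t) : ℝ) /
            (Nat.factorial (m t) * ∏ j ∈ Finset.univ.erase t, Nat.factorial (i j))) *
          (1 / ((∏ j ∈ Finset.univ.erase t, x j ^ (m j - i j + 1)) *
            (∑ j, x j) ^ ((∑ j ∈ Finset.univ.erase t, i j) + m t + 1))) := by
  set S := ∑ j, x j
  have hp : ∑ j, x j / S = 1 := by rw [← sum_div, div_self hs]
  calc 1 / ∏ j, x j ^ (m j + 1)
      = (∑ t, ∑ c ∈ Iic m with c t = m t,
          multinomialTerm (fun j => x j / S) c * (x t / S)) / ∏ j, x j ^ (m j + 1) := by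
        rw [sum_sum_filter_eq_multinomialTerm_mul_eq_one hp]
    _ = _ := by
        simp_rw [sum_div, sum_filter_apply_eq_eq_sum_piFinset]
        refine sum_congr rfl fun t _ => sum_congr rfl fun i hi =>
          multinomialTerm_update_mul_div_prod_pow hx hs fun j hj => ?_
        simpa [hj, Nat.lt_succ_iff] using Fintype.mem_piFinset.1 hi j

theorem n_var_inverse_identity (n : ℕ) (hn : 0 < n) (m : Fin n → ℕ) (x : Fin n → ℝ)
    (hx : ∀ t, x t ≠ 0) (hs : (∑ j, x j) ≠ 0) :
    1 / (∏ j, x j ^ (m j + 1))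
      = ∑ t, ∑ i ∈ Fintype.piFinset (fun j => Finset.range (if j = t then 1 else m j + 1)),
          ((Nat.factorial ((∑ j ∈ Finset.univ.erase t, i j) + m t) : ℝ) /
            (Nat.factorial (m t) * ∏ j ∈ Finset.univ.erase t, Nat.factorial (i j))) *
          (1 / ((∏ j ∈ Finset.univ.erase t, x j ^ (m j - i j + 1)) *
            (∑ j, x j) ^ ((∑ j ∈ Finset.univ.erase t, i j) + m t + 1))) :=
  n_var_inverse_identity_general n m x hx hs
end
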